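/- arXiv:1901.03226 — 8 statements merged into one kernel-verified Lean document; each statement's English description precedes it below -/
import Mathlib

section
/- Let A = [A₁|…|Aₙ] be a tensor in ℂ^{m×m×n} with n ≥ 2, given by its slices A₁,…,Aₙ ∈ ℂ^{m×m}, and suppose A₁ is nonsingular. Then the tensor rank of A equals m if and only if the matrices A₂A₁⁻¹, …, AₙA₁⁻¹ can be diagonalized simultaneously, i.e., there exists an invertible matrix P ∈ GL_m(ℂ) such that P⁻¹(A_kA₁⁻¹)P is diagonal for every k = 2,…,n. -/
open Matrix Finset

/-- The tensor rank of an array `A ∈ 𝔽^{l×m×n}`: the minimal `r` such that `A` is a sum of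
`r` elementary (decomposable) tensors `x ⊗ y ⊗ z = (x_i y_j z_k)`. -/
noncomputable def tensorRank {𝔽 : Type*} [Field 𝔽] {l m n : ℕ}
    (A : Fin l → Fin m → Fin n → 𝔽) : ℕ :=
  sInf {r : ℕ | ∃ (x : Fin r → Fin l → 𝔽) (y : Fin r → Fin m → 𝔽) (z : Fin r → Fin n → 𝔽),
      A = ∑ i : Fin r, fun p q s => x i p * y i q * z i s}

/-- The multilinear matrix multiplication: `(L,M,N)·A` has entries
`b_{pqr} = Σ_{i,j,k} L_{pi} M_{qj} N_{rk} a_{ijk}`. -/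
def mulAct {𝔽 : Type*} [Field 𝔽] {l m n : ℕ}
    (L : Matrix (Fin l) (Fin l) 𝔽) (M : Matrix (Fin m) (Fin m) 𝔽) (N : Matrix (Fin n) (Fin n) 𝔽)
    (A : Fin l → Fin m → Fin n → 𝔽) : Fin l → Fin m → Fin n → 𝔽 :=
  fun p q r => ∑ i, ∑ j, ∑ k, L p i * M q j * N r k * A i j k

/-- The elementary (decomposable) tensor `x ⊗ y ⊗ z = (x_i y_j z_k)`. -/
def elemT {𝔽 : Type*} [Field 𝔽] {l m n : ℕ}
    (x : Fin l → 𝔽) (y : Fin m → 𝔽) (z : Fin n → 𝔽) : Fin l → Fin m → Fin n → 𝔽 :=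
  fun i j k => x i * y j * z k

/-!
A decomposition `A = ∑_{t < r} x_t ⊗ y_t ⊗ z_t` is the same thing as a simultaneous
factorization `A_k = X D_k Y` of all slices, with `X ∈ 𝔽^{l×r}`, `Y ∈ 𝔽^{r×m}` and
`D_k = diag(z_{1k}, …, z_{rk})`. Hence every slice rank bounds the tensor rank from below, so
`rank A ≥ rank A₁ = m`. For `r = m`, invertibility of `A₁ = X D₁ Y` forces `X`, `D₁`, `Y` to be
invertible, and then `X⁻¹ (A_k A₁⁻¹) X = D_k D₁⁻¹` is diagonal. Conversely, if
`P⁻¹ (A_k A₁⁻¹) P = Δ_k` is diagonal for all `k` (with `Δ₁ = 1`), then `A_k = P Δ_k (P⁻¹ A₁)` is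
such a factorization with `r = m`.
-/

section SliceFactorization

variable {R : Type*} [CommSemiring R] {l m n r : ℕ}

theorem eq_sum_iff_slices_eq_mul_diagonal_mul (A : Fin l → Fin m → Fin n → R)
    (X : Matrix (Fin l) (Fin r) R) (Y : Matrix (Fin r) (Fin m) R) (z : Fin r → Fin n → R) :
    A = ∑ t : Fin r, (fun p q s => X p t * Y t q * z t s) ↔
      ∀ k, Matrix.of (fun i j => A i j k) = X * diagonal (fun t => z t k) * Y := by
  have hslice : ∀ k p q, (X * diagonal (fun t => z t k) * Y) p q = ∑ t, X p t * Y t q * z t k :=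
    fun k p q => by rw [mul_apply]; exact sum_congr rfl fun t _ => by rw [mul_diagonal]; ring
  simp only [funext_iff, ← Matrix.ext_iff, of_apply, hslice, Finset.sum_apply]
  exact ⟨fun h k p q => h p q k, fun h p q k => h k p q⟩

theorem exists_sum_iff_exists_slices_eq_mul_diagonal_mul (A : Fin l → Fin m → Fin n → R) :
    (∃ (x : Fin r → Fin l → R) (y : Fin r → Fin m → R) (z : Fin r → Fin n → R),
        A = ∑ i : Fin r, fun p q s => x i p * y i q * z i s) ↔
      ∃ (X : Matrix (Fin l) (Fin r) R) (Y : Matrix (Fin r) (Fin m) R) (z : Fin r → Fin n → R),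
        ∀ k, Matrix.of (fun i j => A i j k) = X * diagonal (fun t => z t k) * Y := by
  constructor
  · rintro ⟨x, y, z, h⟩
    exact ⟨Matrix.of fun p t => x t p, Matrix.of y, z,
      (eq_sum_iff_slices_eq_mul_diagonal_mul A _ _ z).1 h⟩
  · rintro ⟨X, Y, z, h⟩
    exact ⟨fun t p => X p t, Y, z, (eq_sum_iff_slices_eq_mul_diagonal_mul A X Y z).2 h⟩

end SliceFactorization

section TensorRank

variable {𝔽 : Type*} [Field 𝔽] {l m n : ℕ}

theorem exists_sum_length_mul (A : Fin l → Fin m → Fin n → 𝔽) :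
    ∃ (x : Fin (l * m) → Fin l → 𝔽) (y : Fin (l * m) → Fin m → 𝔽) (z : Fin (l * m) → Fin n → 𝔽),
      A = ∑ i : Fin (l * m), fun p q s => x i p * y i q * z i s := by
  classical
  let e := finProdFinEquiv (m := l) (n := m)
  refine ⟨fun t => Pi.single (e.symm t).1 1, fun t => Pi.single (e.symm t).2 1,
    fun t => A (e.symm t).1 (e.symm t).2, ?_⟩
  rw [← e.sum_comp]
  ext p q s
  simp [Finset.sum_apply, Fintype.sum_prod_type, Pi.single_apply]

theorem exists_sum_length_tensorRank (A : Fin l → Fin m → Fin n → 𝔽) :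
    ∃ (x : Fin (tensorRank A) → Fin l → 𝔽) (y : Fin (tensorRank A) → Fin m → 𝔽)
      (z : Fin (tensorRank A) → Fin n → 𝔽),
      A = ∑ i : Fin (tensorRank A), fun p q s => x i p * y i q * z i s := by
  have hne : {r : ℕ | ∃ (x : Fin r → Fin l → 𝔽) (y : Fin r → Fin m → 𝔽) (z : Fin r → Fin n → 𝔽),
      A = ∑ i : Fin r, fun p q s => x i p * y i q * z i s}.Nonempty :=
    ⟨l * m, exists_sum_length_mul A⟩
  exact Nat.sInf_mem hne

theorem rank_slice_le_tensorRank (A : Fin l → Fin m → Fin n → 𝔽) (k : Fin n) :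
    (Matrix.of fun i j => A i j k).rank ≤ tensorRank A := by
  obtain ⟨X, Y, z, h⟩ := (exists_sum_iff_exists_slices_eq_mul_diagonal_mul A).1
    (exists_sum_length_tensorRank A)
  calc (Matrix.of fun i j => A i j k).rank
      ≤ X.rank := by rw [h k, Matrix.mul_assoc]; exact rank_mul_le_left _ _
    _ ≤ tensorRank A := (rank_le_card_width X).trans_eq (Fintype.card_fin _)

theorem tensorRank_eq_iff_of_le {A : Fin l → Fin m → Fin n → 𝔽} {r : ℕ} (h : r ≤ tensorRank A) :
    tensorRank A = r ↔ ∃ (x : Fin r → Fin l → 𝔽) (y : Fin r → Fin m → 𝔽) (z : Fin r → Fin n → 𝔽),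
      A = ∑ i : Fin r, fun p q s => x i p * y i q * z i s := by
  refine ⟨fun hr => hr ▸ exists_sum_length_tensorRank A, fun hmem => ?_⟩
  exact le_antisymm (Nat.sInf_le hmem) h

end TensorRank

section SimultaneousDiagonalization

variable {ι m 𝔽 : Type*} [Fintype m] [DecidableEq m] [Field 𝔽]

theorem exists_isDiag_of_eq_mul_diagonal_mul {M : ι → Matrix m m 𝔽} {k₀ : ι}
    (h₀ : IsUnit (M k₀)) {X Y : Matrix m m 𝔽} {z : m → ι → 𝔽}
    (hM : ∀ k, M k = X * diagonal (fun t => z t k) * Y) :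
    ∃ P : GL m 𝔽, ∀ k, (((P⁻¹ : GL m 𝔽) : Matrix m m 𝔽) * (M k * (M k₀)⁻¹) * P).IsDiag := by
  have hdet := (isUnit_iff_isUnit_det _).mp h₀
  rw [hM, det_mul, det_mul] at hdet
  have hX : IsUnit X.det := isUnit_of_mul_isUnit_left (isUnit_of_mul_isUnit_left hdet)
  have hY : IsUnit Y.det := isUnit_of_mul_isUnit_right hdet
  have hXu : IsUnit X := (isUnit_iff_isUnit_det X).mpr hX
  refine ⟨hXu.unit, fun k => ?_⟩
  rw [coe_units_inv, hXu.unit_spec]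
  have hconj : X⁻¹ * (M k * (M k₀)⁻¹) * X =
      diagonal (fun t => z t k) * (diagonal (fun t => z t k₀))⁻¹ := by
    rw [hM k, hM k₀, Matrix.mul_inv_rev, Matrix.mul_inv_rev]
    simp only [Matrix.mul_assoc, nonsing_inv_mul_cancel_left _ _ hX,
      mul_nonsing_inv_cancel_left _ _ hY, nonsing_inv_mul _ hX, Matrix.mul_one]
  rw [hconj, inv_diagonal, diagonal_mul_diagonal]
  exact isDiag_diagonal _

theorem exists_eq_mul_diagonal_mul_of_isDiag {M : ι → Matrix m m 𝔽} {k₀ : ι}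
    (h₀ : IsUnit (M k₀)) (P : GL m 𝔽)
    (hP : ∀ k, k ≠ k₀ → (((P⁻¹ : GL m 𝔽) : Matrix m m 𝔽) * (M k * (M k₀)⁻¹) * P).IsDiag) :
    ∃ (X Y : Matrix m m 𝔽) (z : m → ι → 𝔽), ∀ k, M k = X * diagonal (fun t => z t k) * Y := by
  set B : ι → Matrix m m 𝔽 := fun k => ((P⁻¹ : GL m 𝔽) : Matrix m m 𝔽) * (M k * (M k₀)⁻¹) * P
  have hdet := (isUnit_iff_isUnit_det _).mp h₀
  have hB : ∀ k, (B k).IsDiag := by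
    intro k
    by_cases hk : k = k₀
    · have hB₀ : B k₀ = 1 := by simp only [B, mul_nonsing_inv _ hdet, Matrix.mul_one, Units.inv_mul]
      exact hk ▸ hB₀ ▸ isDiag_one
    · exact hP k hk
  refine ⟨P, (P⁻¹ : GL m 𝔽) * M k₀, fun t k => B k t t, fun k => ?_⟩
  calc M k = P * B k * (((P⁻¹ : GL m 𝔽) : Matrix m m 𝔽) * M k₀) := by
        simp only [B, Matrix.mul_assoc, Units.mul_inv_cancel_left,
          nonsing_inv_mul _ hdet, Matrix.mul_one]
    _ = P * diagonal (B k).diag * (((P⁻¹ : GL m 𝔽) : Matrix m m 𝔽) * M k₀) := by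
        rw [(hB k).diagonal_diag]

theorem exists_eq_mul_diagonal_mul_iff_exists_isDiag {M : ι → Matrix m m 𝔽} {k₀ : ι}
    (h₀ : IsUnit (M k₀)) :
    (∃ (X Y : Matrix m m 𝔽) (z : m → ι → 𝔽), ∀ k, M k = X * diagonal (fun t => z t k) * Y) ↔
      ∃ P : GL m 𝔽, ∀ k, k ≠ k₀ →
        (((P⁻¹ : GL m 𝔽) : Matrix m m 𝔽) * (M k * (M k₀)⁻¹) * P).IsDiag :=
  ⟨fun ⟨_, _, _, hM⟩ => (exists_isDiag_of_eq_mul_diagonal_mul h₀ hM).imp fun _ hP k _ => hP k,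
    fun ⟨P, hP⟩ => exists_eq_mul_diagonal_mul_of_isDiag h₀ P hP⟩

end SimultaneousDiagonalization

/-- Bi's criterion: let `A = [A₁|…|Aₙ] ∈ ℂ^{m×m×n}` with `n ≥ 2`, where the slice
`A_k = (a_{ijk})`, and suppose the first slice `A₁` (index `0`) is nonsingular. Then
`rank(A) = m` if and only if the matrices `A₂A₁⁻¹, …, AₙA₁⁻¹` are simultaneously
diagonalizable, i.e. there is `P ∈ GL_m(ℂ)` with `P⁻¹ (A_k A₁⁻¹) P` diagonal for all
`k ≠ 1`. -/
theorem tensorRank_eq_dim_iff_simultaneously_diagonalizable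
    {m n : ℕ} (hn : 2 ≤ n) (A : Fin m → Fin m → Fin n → ℂ)
    (hA₁ : IsUnit (Matrix.of fun i j => A i j (⟨0, by omega⟩ : Fin n))) :
    tensorRank A = m ↔
      ∃ P : GL (Fin m) ℂ, ∀ k : Fin n, k ≠ (⟨0, by omega⟩ : Fin n) →
        (((P⁻¹ : GL (Fin m) ℂ) : Matrix (Fin m) (Fin m) ℂ) *
          ((Matrix.of fun i j => A i j k) *
            (Matrix.of fun i j => A i j (⟨0, by omega⟩ : Fin n))⁻¹) *
          (P : Matrix (Fin m) (Fin m) ℂ)).IsDiag := by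
  have hrank : m ≤ tensorRank A := by
    simpa only [rank_of_isUnit _ hA₁, Fintype.card_fin] using
      rank_slice_le_tensorRank A ⟨0, by omega⟩
  rw [tensorRank_eq_iff_of_le hrank, exists_sum_iff_exists_slices_eq_mul_diagonal_mul]
  exact exists_eq_mul_diagonal_mul_iff_exists_isDiag
    (M := fun k => Matrix.of fun i j => A i j k) hA₁
end

section
/- Let f₁, f₂, …, f_k : GL_n(ℂ) → GL_n(ℂ) be a finite family of self-mappings of the general linear group such that at least one of these mappings is open with respect to the Euclidean topology. Let A₁, A₂, …, A_k be arbitrary matrices in M_n(ℂ) and let ‖·‖ be a norm on M_n(ℂ). Then for every ε > 0 there exists a finite family A_{1ε}, A_{2ε}, …, A_{kε} of invertible matrices with simple spectra such that ‖A_i − A_{iε}‖ < ε for every i = 1,…,k and the product matrix f₁(A_{1ε}) f₂(A_{2ε}) ⋯ f_k(A_{kε}) has a simple spectrum. -/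
/-!
Invertible matrices with simple spectrum are the non-zeros of `M ↦ det M · det χ_M'(M)`, a
polynomial in the entries of `M`; so they form an open set, which is dense because on the line
from any matrix to a diagonal matrix with distinct non-zero entries this function is a non-zero
polynomial in one variable. Approximate every `Aᵢ` by such a matrix. With all other factors fixed,
the product is `X ↦ a · f_{i₀}(X) · b` for some `a, b`, an open map when `f_{i₀}` is open, so
moving the `i₀`-th approximant inside the open set of good approximants of `A_{i₀}` makes the
product meet the dense set of matrices with simple spectrum.
-/

open Matrix Polynomial

theorem List.ofFn_update {α : Type*} {k : ℕ} (F : Fin k → α) (i : Fin k) (x : α) :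
    List.ofFn (Function.update F i x) = (List.ofFn F).set i x := by
  refine List.ext_getElem (by simp) fun m h _ => ?_
  simp [List.getElem_set, Function.update_apply, Fin.ext_iff, eq_comm]

theorem List.prod_ofFn_update {M : Type*} [Monoid M] {k : ℕ} (F : Fin k → M) (i : Fin k) (x : M) :
    (List.ofFn (Function.update F i x)).prod =
      ((List.ofFn F).take i).prod * x * ((List.ofFn F).drop (i + 1)).prod := by
  rw [List.ofFn_update, List.prod_set, if_pos (by simp)]

theorem exists_mem_prod_ofFn_update_mem {G : Type*} [Group G] [TopologicalSpace G]
    [ContinuousMul G] {k : ℕ} (g : Fin k → G → G) (u : Fin k → G) (i : Fin k)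
    (hg : IsOpenMap (g i)) {U T : Set G} (hU : IsOpen U) (hu : u i ∈ U) (hT : Dense T) :
    ∃ x ∈ U, (List.ofFn fun j => g j (Function.update u i x j)).prod ∈ T := by
  obtain ⟨a, b, hprod⟩ : ∃ a b : G,
      ∀ x, (List.ofFn fun j => g j (Function.update u i x j)).prod = a * g i x * b :=
    ⟨_, _, fun x => by simp_rw [Function.apply_update g u]; exact List.prod_ofFn_update _ _ _⟩
  have hopen : IsOpenMap fun x => a * g i x * b :=
    (Homeomorph.mulRight b).isOpenMap.comp ((Homeomorph.mulLeft a).isOpenMap.comp hg)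
  obtain ⟨_, hyT, x, hxU, rfl⟩ := hT.exists_mem_open (hopen U hU) ⟨_, u i, hu, rfl⟩
  exact ⟨x, hxU, hprod x ▸ hyT⟩

namespace Matrix

variable {ι : Type*} [Fintype ι]

theorem continuous_seminorm (p : Seminorm ℂ (Matrix ι ι ℂ)) : Continuous p := by
  -- the sup norm induces the product topology, so it gives access to normed-space results
  let _ := Matrix.normedAddCommGroup (m := ι) (n := ι) (α := ℂ)
  let _ := Matrix.normedSpace (m := ι) (n := ι) (α := ℂ) (R := ℝ)
  exact p.convexOn.locallyLipschitz.continuous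

variable [DecidableEq ι]

/-- Up to sign, `det M` times the discriminant of `M.charpoly`. -/
noncomputable def detDiscr {R : Type*} [CommRing R] (M : Matrix ι ι R) : R :=
  M.det * (aeval M M.charpoly.derivative).det

theorem detDiscr_map {R S : Type*} [CommRing R] [CommRing S] (φ : R →+* S) (M : Matrix ι ι R) :
    (M.map φ).detDiscr = φ M.detDiscr := by
  have hcomm : (algebraMap S (Matrix ι ι S)).comp φ =
      φ.mapMatrix.comp (algebraMap R (Matrix ι ι R)) := by
    ext r i j
    simp [algebraMap_matrix_apply, apply_ite φ]
  rw [detDiscr, detDiscr, map_mul, RingHom.map_det, RingHom.map_det,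
    map_aeval_eq_aeval_map hcomm, charpoly_map, derivative_map]
  rfl

theorem continuous_detDiscr {R : Type*} [CommRing R] [TopologicalSpace R] [IsTopologicalRing R] :
    Continuous (detDiscr : Matrix ι ι R → R) := by
  have h : ∀ M : Matrix ι ι R, M.detDiscr =
      MvPolynomial.eval (fun p : ι × ι => M p.1 p.2) (mvPolynomialX ι ι R).detDiscr := by
    intro M
    rw [← detDiscr_map]
    congr 1
    exact (mvPolynomialX_map_eval₂ (RingHom.id R) M).symm
  simp only [funext h]
  exact (MvPolynomial.continuous_eval _).comp (by fun_prop)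

theorem detDiscr_add_smul {R : Type*} [CommRing R] (A B : Matrix ι ι R) (t : R) :
    (A + t • B).detDiscr = (A.map C + (X : R[X]) • B.map C).detDiscr.eval t := by
  rw [← coe_evalRingHom, ← detDiscr_map]
  congr 1
  ext i j
  simp only [map_apply, add_apply, smul_apply, smul_eq_mul, coe_evalRingHom, eval_add, eval_mul,
    eval_C, eval_X]

variable {K : Type*} [Field K]

theorem isUnit_aeval_derivative_charpoly_iff [IsAlgClosed K] (M : Matrix ι ι K) :
    IsUnit (aeval M M.charpoly.derivative) ↔ M.charpoly.roots.Nodup := by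
  classical
  have hχ : M.charpoly ≠ 0 := M.charpoly_monic.ne_zero
  constructor
  · intro hunit
    rw [Multiset.nodup_iff_count_le_one]
    intro r
    by_contra! hr
    rw [count_roots, one_lt_rootMultiplicity_iff_isRoot hχ] at hr
    have h0 : (0 : K) ∈ spectrum K (aeval M M.charpoly.derivative) :=
      hr.2.eq_zero ▸ spectrum.subset_polynomial_aeval M _
        ⟨r, mem_spectrum_iff_isRoot_charpoly.mpr hr.1, rfl⟩
    exact (spectrum.zero_mem_iff K).mp h0 hunit
  · rw [nodup_roots_iff_of_splits hχ (IsAlgClosed.splits _)]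
    rintro ⟨a, b, hab⟩
    have h1 := congrArg (aeval M) hab
    rw [map_add, map_mul, map_mul, aeval_self_charpoly, mul_zero, zero_add, map_one] at h1
    exact (((Commute.all b _).map (aeval M)).isUnit_mul_iff.mp (h1 ▸ isUnit_one)).2

theorem detDiscr_ne_zero_iff [IsAlgClosed K] (M : Matrix ι ι K) :
    M.detDiscr ≠ 0 ↔ IsUnit M ∧ M.charpoly.roots.Nodup := by
  rw [detDiscr, mul_ne_zero_iff, ← isUnit_iff_ne_zero, ← isUnit_iff_ne_zero,
    ← isUnit_iff_isUnit_det, ← isUnit_iff_isUnit_det, isUnit_aeval_derivative_charpoly_iff]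

theorem nodup_roots_charpoly_diagonal {d : ι → K} (hd : Function.Injective d) :
    (diagonal d).charpoly.roots.Nodup := by
  classical
  rw [charpoly_diagonal, ← Finset.prod_image (f := fun a => X - C a) hd.injOn, roots_prod_X_sub_C]
  exact Finset.nodup _

theorem exists_detDiscr_ne_zero : ∃ D : Matrix ι ι ℂ, D.detDiscr ≠ 0 := by
  let d : ι → ℂ := fun i => ((Fintype.equivFin ι i : ℕ) + 1 : ℕ)
  have hd : Function.Injective d := fun i j h => by
    simpa [d, Fin.val_inj] using h
  refine ⟨diagonal d, (detDiscr_ne_zero_iff _).mpr ⟨?_, nodup_roots_charpoly_diagonal hd⟩⟩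
  rw [isUnit_iff_isUnit_det, det_diagonal, isUnit_iff_ne_zero, Finset.prod_ne_zero_iff]
  exact fun i _ => Nat.cast_ne_zero.mpr (Nat.succ_ne_zero _)

theorem isOpen_setOf_isUnit_and_nodup_roots_charpoly [TopologicalSpace K] [IsTopologicalRing K]
    [T1Space K] [IsAlgClosed K] :
    IsOpen {M : Matrix ι ι K | IsUnit M ∧ M.charpoly.roots.Nodup} := by
  simp_rw [← detDiscr_ne_zero_iff]
  exact isOpen_ne_fun continuous_detDiscr continuous_const

theorem dense_setOf_isUnit_and_nodup_roots_charpoly :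
    Dense {M : Matrix ι ι ℂ | IsUnit M ∧ M.charpoly.roots.Nodup} := by
  simp_rw [← detDiscr_ne_zero_iff]
  rw [dense_iff_inter_open]
  rintro U hU ⟨A, hA⟩
  obtain ⟨D, hD⟩ := exists_detDiscr_ne_zero (ι := ι)
  set p := (A.map C + (X : ℂ[X]) • (D - A).map C).detDiscr
  have hD1 : D.detDiscr = p.eval 1 := by simpa using detDiscr_add_smul A (D - A) 1
  have hp : p ≠ 0 := fun h => hD (by rw [hD1, h, eval_zero])
  have hdense : Dense {t : ℂ | p.eval t ≠ 0} := by
    convert (p.roots.toFinset.countable_toSet).dense_compl ℂ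
    ext
    simp [hp]
  obtain ⟨t, ht, htU⟩ := hdense.exists_mem_open
    (hU.preimage (by fun_prop : Continuous fun t : ℂ => A + t • (D - A))) ⟨0, by simpa⟩
  exact ⟨_, htU, (detDiscr_add_smul A (D - A) t).trans_ne ht⟩

namespace GeneralLinearGroup

theorem isOpenMap_val : IsOpenMap (Units.val : GL ι ℂ → Matrix ι ι ℂ) := by
  let _ := Matrix.linftyOpNormedRing (n := ι) (α := ℂ)
  let _ := Matrix.linftyOpNormedAlgebra (n := ι) (α := ℂ) (R := ℂ)
  have : CompleteSpace (Matrix ι ι ℂ) := FiniteDimensional.complete ℂ _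
  exact Units.isOpenMap_val

theorem exists_val_mem_and_nodup_roots_charpoly {V : Set (Matrix ι ι ℂ)} (hV : IsOpen V)
    (hne : V.Nonempty) :
    ∃ g : GL ι ℂ, (g : Matrix ι ι ℂ) ∈ V ∧ (g : Matrix ι ι ℂ).charpoly.roots.Nodup := by
  obtain ⟨M, ⟨hM, hnodup⟩, hMV⟩ :=
    dense_setOf_isUnit_and_nodup_roots_charpoly.exists_mem_open hV hne
  exact ⟨hM.unit, hMV, hnodup⟩

theorem isOpen_setOf_nodup_roots_charpoly :
    IsOpen {g : GL ι ℂ | (g : Matrix ι ι ℂ).charpoly.roots.Nodup} := by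
  have h : {g : GL ι ℂ | (g : Matrix ι ι ℂ).charpoly.roots.Nodup} =
      Units.val ⁻¹' {M | IsUnit M ∧ M.charpoly.roots.Nodup} := by
    ext g
    simp
  exact h ▸ isOpen_setOf_isUnit_and_nodup_roots_charpoly.preimage Units.continuous_val

theorem dense_setOf_nodup_roots_charpoly :
    Dense {g : GL ι ℂ | (g : Matrix ι ι ℂ).charpoly.roots.Nodup} := by
  refine dense_iff_inter_open.mpr fun O hO hne => ?_
  obtain ⟨g, ⟨g', hg'O, hg'⟩, hg⟩ :=
    exists_val_mem_and_nodup_roots_charpoly (isOpenMap_val O hO) (hne.image _)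
  exact ⟨g, Units.val_injective hg' ▸ hg'O, hg⟩

end GeneralLinearGroup

end Matrix

theorem exists_simple_spectrum_approx_family_general
    {n k : ℕ}
    (f : Fin k → GL (Fin n) ℂ → GL (Fin n) ℂ)
    (hopen : ∃ i, IsOpenMap (f i))
    (A : Fin k → Matrix (Fin n) (Fin n) ℂ)
    (nrm : Seminorm ℂ (Matrix (Fin n) (Fin n) ℂ))
    (ε : ℝ) (hε : 0 < ε) :
    ∃ Aε : Fin k → GL (Fin n) ℂ,
      (∀ i, nrm (A i - (Aε i : Matrix (Fin n) (Fin n) ℂ)) < ε) ∧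
      (∀ i, ((Aε i : Matrix (Fin n) (Fin n) ℂ)).charpoly.roots.Nodup) ∧
      (((List.ofFn fun i => f i (Aε i)).prod : GL (Fin n) ℂ) :
          Matrix (Fin n) (Fin n) ℂ).charpoly.roots.Nodup := by
  obtain ⟨i₀, hi₀⟩ := hopen
  let V : Fin k → Set (Matrix (Fin n) (Fin n) ℂ) := fun i => {M | nrm (A i - M) < ε}
  have hV : ∀ i, IsOpen (V i) := fun i =>
    isOpen_lt ((continuous_seminorm nrm).comp (by fun_prop)) continuous_const
  have hAV : ∀ i, A i ∈ V i := fun i => by simpa [V] using hε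
  choose u huV hu using fun i =>
    GeneralLinearGroup.exists_val_mem_and_nodup_roots_charpoly (hV i) ⟨A i, hAV i⟩
  obtain ⟨x, ⟨hxV, hx⟩, hprod⟩ := exists_mem_prod_ofFn_update_mem f u i₀ hi₀
    (((hV i₀).preimage Units.continuous_val).inter
      GeneralLinearGroup.isOpen_setOf_nodup_roots_charpoly)
    ⟨huV i₀, hu i₀⟩ GeneralLinearGroup.dense_setOf_nodup_roots_charpoly
  have hmem : ∀ i, (Function.update u i₀ x i : Matrix (Fin n) (Fin n) ℂ) ∈ V i ∧
      (Function.update u i₀ x i : Matrix (Fin n) (Fin n) ℂ).charpoly.roots.Nodup := by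
    intro i
    rcases eq_or_ne i i₀ with rfl | hi
    · simpa using ⟨hxV, hx⟩
    · simpa [hi] using ⟨huV i, hu i⟩
  exact ⟨_, fun i => (hmem i).1, fun i => (hmem i).2, hprod⟩

/-- Let `f₁, …, f_k : GL_n(ℂ) → GL_n(ℂ)` be self-mappings, at least one of which is open with
respect to the Euclidean topology. Let `A₁, …, A_k ∈ M_n(ℂ)` and let `‖·‖` be a norm on
`M_n(ℂ)` (modelled as a `Seminorm` over `ℂ` which vanishes only at `0`). Then for every
`ε > 0` there are invertible matrices `A_{1ε}, …, A_{kε}`, each with simple spectrum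
(pairwise distinct eigenvalues, i.e. the roots of the characteristic polynomial form a
multiset with no duplicates), such that `‖A_i − A_{iε}‖ < ε` for all `i` and the ordered
product `f₁(A_{1ε}) f₂(A_{2ε}) ⋯ f_k(A_{kε})` has a simple spectrum. -/
theorem exists_simple_spectrum_approx_family
    {n k : ℕ} (hn : 0 < n) (hk : 0 < k)
    (f : Fin k → GL (Fin n) ℂ → GL (Fin n) ℂ)
    (hopen : ∃ i, IsOpenMap (f i))
    (A : Fin k → Matrix (Fin n) (Fin n) ℂ)
    (nrm : Seminorm ℂ (Matrix (Fin n) (Fin n) ℂ))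
    (hnrm : ∀ X, nrm X = 0 → X = 0)
    (ε : ℝ) (hε : 0 < ε) :
    ∃ Aε : Fin k → GL (Fin n) ℂ,
      (∀ i, nrm (A i - (Aε i : Matrix (Fin n) (Fin n) ℂ)) < ε) ∧
      (∀ i, ((Aε i : Matrix (Fin n) (Fin n) ℂ)).charpoly.roots.Nodup) ∧
      (((List.ofFn fun i => f i (Aε i)).prod : GL (Fin n) ℂ) :
          Matrix (Fin n) (Fin n) ℂ).charpoly.roots.Nodup :=
  exists_simple_spectrum_approx_family_general f hopen A nrm ε hε
end

section
/- Let A and B be matrices in M_n(ℂ) and let ‖·‖ be a norm on M_n(ℂ). Then for every ε > 0 there exists a pair of invertible matrices A_ε, B_ε ∈ GL_n(ℂ), each with a simple spectrum, such that ‖A − A_ε‖ < ε, ‖B − B_ε‖ < ε, and the product matrix A_ε B_ε⁻¹ has a simple spectrum. -/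
/-!
Having a simple spectrum (a separable characteristic polynomial) and being invertible are
Zariski-open conditions: along an affine line `t ↦ M + t • N` of matrices they say that a
polynomial in `t` does not vanish (the resultant of the characteristic polynomial with its
derivative, resp. the determinant). So if they hold at one point of a line, they fail at only
finitely many points of it, and hence hold for arbitrarily small `t`.

First move `B` slightly towards a diagonal matrix `D` with distinct nonzero entries to get `Bε`.
On the line through `D` and `D Bε` there is an invertible `X` such that both `X` and `X Bε⁻¹`
have simple spectrum; move `A` slightly towards `X` to get `Aε`.
-/

open Filter Matrix Polynomial Topology

theorem Polynomial.Monic.separable_map_iff {R K : Type*} [CommRing R] [Field K] {f : R[X]}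
    (hf : f.Monic) (φ : R →+* K) :
    (f.map φ).Separable ↔ φ (f.resultant (derivative f) f.natDegree (f.natDegree - 1)) ≠ 0 := by
  have hg : (f.map φ).Monic := hf.map φ
  have hdeg : (derivative (f.map φ)).natDegree ≤ f.natDegree - 1 := by
    simpa [hf.natDegree_map] using natDegree_derivative_le (f.map φ)
  obtain ⟨k, hk⟩ := Nat.exists_eq_add_of_le hdeg
  rw [← resultant_map_map, ← derivative_map, hk, ← hf.natDegree_map φ,
    resultant_add_right_deg _ _ _ _ _ le_rfl, hg.coeff_natDegree, one_pow, one_mul,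
    ← isUnit_iff_ne_zero, isUnit_resultant_iff_isCoprime hg, separable_def]

theorem Polynomial.eventually_cofinite_eval_ne_zero {R : Type*} [CommRing R] [IsDomain R]
    {p : R[X]} {t₀ : R} (h : p.eval t₀ ≠ 0) : ∀ᶠ t in cofinite, p.eval t ≠ 0 := by
  have hp : p ≠ 0 := by rintro rfl; exact h eval_zero
  simpa [eventually_cofinite, IsRoot] using finite_setOfPred_isRoot hp

namespace Matrix

theorem map_evalRingHom_map_C_add_X_smul {m n R : Type*} [CommRing R] (M N : Matrix m n R) (t : R) :
    (M.map C + (X : R[X]) • N.map C).map (evalRingHom t) = M + t • N := by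
  ext i j
  simp [mul_comm (N i j)]

variable {n K : Type*} [Fintype n] [DecidableEq n] [Field K]

theorem eventually_cofinite_charpoly_add_smul_separable {M N : Matrix n n K} {t₀ : K}
    (h : (M + t₀ • N).charpoly.Separable) :
    ∀ᶠ t : K in cofinite, (M + t • N).charpoly.Separable := by
  set L := M.map C + (X : K[X]) • N.map C
  have hL (t : K) : (M + t • N).charpoly.Separable ↔
      (L.charpoly.resultant (derivative L.charpoly) L.charpoly.natDegree
        (L.charpoly.natDegree - 1)).eval t ≠ 0 := by
    rw [← map_evalRingHom_map_C_add_X_smul, charpoly_map, (charpoly_monic L).separable_map_iff,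
      coe_evalRingHom]
  simp_rw [hL] at h ⊢
  exact eventually_cofinite_eval_ne_zero h

theorem eventually_cofinite_det_add_smul_ne_zero {M N : Matrix n n K} {t₀ : K}
    (h : (M + t₀ • N).det ≠ 0) : ∀ᶠ t : K in cofinite, (M + t • N).det ≠ 0 := by
  have hL (t : K) : (M + t • N).det = (M.map C + (X : K[X]) • N.map C).det.eval t := by
    rw [← map_evalRingHom_map_C_add_X_smul, ← coe_evalRingHom, RingHom.map_det,
      RingHom.mapMatrix_apply]
  simp_rw [hL] at h ⊢
  exact eventually_cofinite_eval_ne_zero h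

theorem eventually_cofinite_mul_add_smul_separable {M N C : Matrix n n K} {t₀ : K}
    (h : ((M + t₀ • N) * C).charpoly.Separable) :
    ∀ᶠ t : K in cofinite, ((M + t • N) * C).charpoly.Separable := by
  simp_rw [add_mul, smul_mul] at h ⊢
  exact eventually_cofinite_charpoly_add_smul_separable h

theorem eventually_cofinite_separable_det_ne_zero_mul_separable {M N C : Matrix n n K}
    {t₁ t₂ t₃ : K} (h₁ : (M + t₁ • N).charpoly.Separable) (h₂ : (M + t₂ • N).det ≠ 0)
    (h₃ : ((M + t₃ • N) * C).charpoly.Separable) :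
    ∀ᶠ t : K in cofinite, (M + t • N).charpoly.Separable ∧ (M + t • N).det ≠ 0 ∧
      ((M + t • N) * C).charpoly.Separable :=
  (eventually_cofinite_charpoly_add_smul_separable h₁).and <|
    (eventually_cofinite_det_add_smul_ne_zero h₂).and
      (eventually_cofinite_mul_add_smul_separable h₃)

theorem exists_charpoly_separable_det_ne_zero [CharZero K] :
    ∃ D : Matrix n n K, D.charpoly.Separable ∧ D.det ≠ 0 := by
  let v (i : n) : K := ((Fintype.equivFin n i : ℕ) + 1 : ℕ)
  have hv : Function.Injective v := fun i j hij => by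
    simpa [v, Fin.val_inj] using hij
  refine ⟨diagonal v, ?_, ?_⟩
  · rw [charpoly_diagonal]
    exact separable_prod_X_sub_C_iff.mpr hv
  · rw [det_diagonal]
    exact Finset.prod_ne_zero_iff.mpr fun i _ => Nat.cast_ne_zero.mpr (Nat.succ_ne_zero _)

theorem exists_charpoly_separable_det_ne_zero_mul_separable [CharZero K] (C : (Matrix n n K)ˣ) :
    ∃ X : Matrix n n K,
      X.charpoly.Separable ∧ X.det ≠ 0 ∧ (X * (C : Matrix n n K)).charpoly.Separable := by
  obtain ⟨D, hD₁, hD₂⟩ := exists_charpoly_separable_det_ne_zero (n := n) (K := K)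
  have h₀ : D + (0 : K) • (D * (↑C⁻¹ : Matrix n n K) - D) = D := by simp
  have h₁ : (D + (1 : K) • (D * (↑C⁻¹ : Matrix n n K) - D)) * (C : Matrix n n K) = D := by
    simp
  obtain ⟨t, ht⟩ := (eventually_cofinite_separable_det_ne_zero_mul_separable
    (M := D) (N := D * (↑C⁻¹ : Matrix n n K) - D) (C := C) (t₁ := 0) (t₂ := 0) (t₃ := 1)
    (by rwa [h₀]) (by rwa [h₀]) (by rwa [h₁])).exists
  exact ⟨_, ht⟩

end Matrix

theorem Seminorm.exists_smul_lt_of_eventually_cofinite {𝕜 E : Type*} [NontriviallyNormedField 𝕜]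
    [AddCommGroup E] [Module 𝕜 E] (p : Seminorm 𝕜 E) (x : E) {ε : ℝ} (hε : 0 < ε)
    {P : 𝕜 → Prop} (hP : ∀ᶠ t in cofinite, P t) : ∃ t : 𝕜, p (t • x) < ε ∧ P t := by
  have hsmall : ∀ᶠ t : 𝕜 in 𝓝 0, p (t • x) < ε := by
    have : Tendsto (fun t : 𝕜 => p (t • x)) (𝓝 0) (𝓝 0) := by
      simpa [map_smul_eq_mul] using (continuous_norm.tendsto (0 : 𝕜)).mul_const (p x)
    exact this.eventually (gt_mem_nhds hε)
  exact ((eventually_nhdsWithin_of_eventually_nhds hsmall).and (nhdsNE_le_cofinite 0 hP)).exists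

theorem Seminorm.exists_sub_lt_charpoly_separable_det_ne_zero_mul_separable
    {𝕜 n : Type*} [NontriviallyNormedField 𝕜] [Fintype n] [DecidableEq n]
    (p : Seminorm 𝕜 (Matrix n n 𝕜)) (A : Matrix n n 𝕜) {ε : ℝ} (hε : 0 < ε)
    {X C : Matrix n n 𝕜} (hX₁ : X.charpoly.Separable) (hX₂ : X.det ≠ 0)
    (hX₃ : (X * C).charpoly.Separable) :
    ∃ Y : Matrix n n 𝕜, p (A - Y) < ε ∧
      Y.charpoly.Separable ∧ Y.det ≠ 0 ∧ (Y * C).charpoly.Separable := by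
  have h₁ : A + (1 : 𝕜) • (X - A) = X := by simp
  obtain ⟨t, ht, hY⟩ := p.exists_smul_lt_of_eventually_cofinite (X - A) hε
    (eventually_cofinite_separable_det_ne_zero_mul_separable (M := A) (N := X - A) (C := C)
      (t₁ := 1) (t₂ := 1) (t₃ := 1) (by rwa [h₁]) (by rwa [h₁]) (by rwa [h₁]))
  refine ⟨A + t • (X - A), ?_, hY⟩
  rwa [sub_add_cancel_left, map_neg_eq_map]

theorem exists_simple_spectrum_approx_pair_general
    {n : ℕ}
    (A B : Matrix (Fin n) (Fin n) ℂ)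
    (nrm : Seminorm ℂ (Matrix (Fin n) (Fin n) ℂ))
    (ε : ℝ) (hε : 0 < ε) :
    ∃ (Aε Bε : GL (Fin n) ℂ),
      nrm (A - (Aε : Matrix (Fin n) (Fin n) ℂ)) < ε ∧
      nrm (B - (Bε : Matrix (Fin n) (Fin n) ℂ)) < ε ∧
      ((Aε : Matrix (Fin n) (Fin n) ℂ)).charpoly.roots.Nodup ∧
      ((Bε : Matrix (Fin n) (Fin n) ℂ)).charpoly.roots.Nodup ∧
      ((Aε * Bε⁻¹ : GL (Fin n) ℂ) : Matrix (Fin n) (Fin n) ℂ).charpoly.roots.Nodup := by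
  obtain ⟨D, hD₁, hD₂⟩ := exists_charpoly_separable_det_ne_zero (n := Fin n) (K := ℂ)
  obtain ⟨B', hB, hB'₁, hB'₂, -⟩ :=
    nrm.exists_sub_lt_charpoly_separable_det_ne_zero_mul_separable B hε hD₁ hD₂
      (C := 1) (by rwa [mul_one])
  let Bε := GeneralLinearGroup.mkOfDetNeZero B' hB'₂
  obtain ⟨X, hX₁, hX₂, hX₃⟩ := exists_charpoly_separable_det_ne_zero_mul_separable Bε⁻¹
  obtain ⟨A', hA, hA'₁, hA'₂, hA'₃⟩ :=
    nrm.exists_sub_lt_charpoly_separable_det_ne_zero_mul_separable A hε hX₁ hX₂ hX₃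
  exact ⟨.mkOfDetNeZero A' hA'₂, Bε, hA, hB, nodup_roots hA'₁, nodup_roots hB'₁,
    nodup_roots hA'₃⟩

/-- Let `A, B ∈ M_n(ℂ)` and let `‖·‖` be a norm on `M_n(ℂ)` (modelled as a `Seminorm` over
`ℂ` which vanishes only at `0`). Then for every `ε > 0` there exist invertible matrices
`A_ε, B_ε ∈ GL_n(ℂ)`, each with simple spectrum (pairwise distinct eigenvalues, i.e. the
roots of the characteristic polynomial form a multiset with no duplicates), such that
`‖A − A_ε‖ < ε`, `‖B − B_ε‖ < ε`, and the product `A_ε B_ε⁻¹` has a simple spectrum. -/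
theorem exists_simple_spectrum_approx_pair
    {n : ℕ} (hn : 0 < n)
    (A B : Matrix (Fin n) (Fin n) ℂ)
    (nrm : Seminorm ℂ (Matrix (Fin n) (Fin n) ℂ))
    (hnrm : ∀ X, nrm X = 0 → X = 0)
    (ε : ℝ) (hε : 0 < ε) :
    ∃ (Aε Bε : GL (Fin n) ℂ),
      nrm (A - (Aε : Matrix (Fin n) (Fin n) ℂ)) < ε ∧
      nrm (B - (Bε : Matrix (Fin n) (Fin n) ℂ)) < ε ∧
      ((Aε : Matrix (Fin n) (Fin n) ℂ)).charpoly.roots.Nodup ∧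
      ((Bε : Matrix (Fin n) (Fin n) ℂ)).charpoly.roots.Nodup ∧
      ((Aε * Bε⁻¹ : GL (Fin n) ℂ) : Matrix (Fin n) (Fin n) ℂ).charpoly.roots.Nodup :=
  exists_simple_spectrum_approx_pair_general A B nrm ε hε
end

section
/- Let n ≥ 2, let A be a tensor in ℂ^{n×n×2}, and let ‖·‖ be a norm on ℂ^{n×n×2}. Then inf { ‖A − B‖ : B ∈ ℂ^{n×n×2} and rank(B) = n } = 0; that is, every tensor in ℂ^{n×n×2} may be approximated arbitrarily closely by tensors whose tensor ranks are equal to n. -/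
open Matrix Finset

/-!
A tensor in `K^{n×n×2}` is a pencil of two slices `(X, Y)`. If `Y` is invertible and
`Y⁻¹ X = P D P⁻¹` is diagonalizable, the slices factor simultaneously as `(Y P) D P⁻¹` and
`(Y P) I P⁻¹`, which exhibits the tensor as a sum of `n` elementary tensors; conversely each slice
of a sum of `r` elementary tensors has matrix rank at most `r`, so the rank is exactly `n`.
Such pencils are dense: matrices with `n` distinct eigenvalues are dense, by induction on `n`
after conjugating an eigenvector to the first basis vector and perturbing the corner entry and the
complementary block separately. Finally a seminorm on a finite-dimensional space is continuous,
so the distance to a dense set is `0`.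
-/

open Polynomial

section Slices

variable {𝔽 : Type*} {l m n : ℕ}

def frontalSlice (A : Fin l → Fin m → Fin n → 𝔽) (k : Fin n) : Matrix (Fin l) (Fin m) 𝔽 :=
  Matrix.of fun i j => A i j k

theorem eq_of_frontalSlice_eq {A B : Fin l → Fin m → Fin n → 𝔽}
    (h : ∀ k, frontalSlice A k = frontalSlice B k) : A = B :=
  funext fun i => funext fun j => funext fun k => congrFun (congrFun (h k) i) j

def ofSlices (X Y : Matrix (Fin l) (Fin m) 𝔽) : Fin l → Fin m → Fin 2 → 𝔽 :=
  fun i j k => ![X i j, Y i j] k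

@[simp]
theorem frontalSlice_ofSlices_zero (X Y : Matrix (Fin l) (Fin m) 𝔽) :
    frontalSlice (ofSlices X Y) 0 = X :=
  rfl

@[simp]
theorem frontalSlice_ofSlices_one (X Y : Matrix (Fin l) (Fin m) 𝔽) :
    frontalSlice (ofSlices X Y) 1 = Y :=
  rfl

theorem frontalSlice_sum_elementary [CommSemiring 𝔽] {r : ℕ} (x : Fin r → Fin l → 𝔽)
    (y : Fin r → Fin m → 𝔽) (z : Fin r → Fin n → 𝔽) (k : Fin n) :
    frontalSlice (∑ i : Fin r, fun p q s => x i p * y i q * z i s) k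
      = (Matrix.of x)ᵀ * diagonal (fun i => z i k) * Matrix.of y := by
  ext p q
  simp only [frontalSlice, Matrix.of_apply, Finset.sum_apply, Matrix.mul_apply, diagonal_apply,
    transpose_apply, mul_ite, mul_zero, Finset.sum_ite_eq', Finset.mem_univ, if_true]
  exact Finset.sum_congr rfl fun i _ => by ring

variable [Field 𝔽]

theorem rank_frontalSlice_le_of_eq_sum {r : ℕ} {A : Fin l → Fin m → Fin n → 𝔽}
    {x : Fin r → Fin l → 𝔽} {y : Fin r → Fin m → 𝔽} {z : Fin r → Fin n → 𝔽}
    (h : A = ∑ i : Fin r, fun p q s => x i p * y i q * z i s) (k : Fin n) :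
    (frontalSlice A k).rank ≤ r := by
  rw [h, frontalSlice_sum_elementary, Matrix.mul_assoc]
  exact (rank_mul_le_right _ _).trans ((rank_le_card_height _).trans (Fintype.card_fin r).le)

theorem tensorRank_eq_of_frontalSlice_eq {r : ℕ} (A : Fin l → Fin m → Fin n → 𝔽)
    (U : Matrix (Fin l) (Fin r) 𝔽) (V : Matrix (Fin r) (Fin m) 𝔽) (z : Fin r → Fin n → 𝔽)
    (h : ∀ k, frontalSlice A k = U * diagonal (fun i => z i k) * V) (k₀ : Fin n)
    (hk₀ : (frontalSlice A k₀).rank = r) : tensorRank A = r := by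
  have hA : A = ∑ i : Fin r, fun p q s => U p i * V i q * z i s :=
    eq_of_frontalSlice_eq fun k =>
      (h k).trans (frontalSlice_sum_elementary (fun i p => U p i) V z k).symm
  refine le_antisymm (Nat.sInf_le ⟨_, _, _, hA⟩) (le_csInf ⟨r, _, _, _, hA⟩ ?_)
  rintro r' ⟨x, y, z', hr'⟩
  exact hk₀ ▸ rank_frontalSlice_le_of_eq_sum hr' k₀

theorem tensorRank_ofSlices_mul_eq {Y : Matrix (Fin n) (Fin n) 𝔽} (hY : IsUnit Y)
    (P : (Matrix (Fin n) (Fin n) 𝔽)ˣ) (d : Fin n → 𝔽) :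
    tensorRank (ofSlices (Y * (P.val * diagonal d * P.val⁻¹)) Y) = n := by
  refine tensorRank_eq_of_frontalSlice_eq _ (Y * P.val) P.val⁻¹ (fun i => ![d i, 1])
    (fun k => ?_) 1 (by simpa using rank_of_isUnit Y hY)
  fin_cases k <;> simp [Matrix.mul_assoc]

end Slices

section Diagonalization

variable {K : Type*} [Field K]

theorem exists_units_eq_mul_diagonal_mul_inv {ι : Type*} [Fintype ι] [DecidableEq ι]
    (M : Matrix ι ι K) {d : ι → K} (hd : Function.Injective d)
    (hM : M.charpoly = ∏ i, (X - C (d i))) :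
    ∃ P : (Matrix ι ι K)ˣ, M = P.val * diagonal d * P.val⁻¹ := by
  have hev : ∀ i, Module.End.HasEigenvalue (toLin' M) (d i) := fun i => by
    rw [Module.End.hasEigenvalue_iff_isRoot_charpoly, Matrix.charpoly_toLin', hM]
    simpa [Polynomial.eval_prod, Finset.prod_eq_zero_iff] using ⟨i, sub_self _⟩
  choose v hv using fun i => (hev i).exists_hasEigenvector
  have hMv : ∀ i, M *ᵥ v i = d i • v i := fun i => by simpa using (hv i).apply_eq_smul
  set P : Matrix ι ι K := (Matrix.of v)ᵀ
  have hP : IsUnit P :=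
    linearIndependent_cols_iff_isUnit.mp (Module.End.eigenvectors_linearIndependent' _ d hd v hv)
  have hMP : M * P = P * diagonal d := by
    ext i j
    rw [mul_diagonal]
    simpa [P, mul_apply, mulVec, dotProduct, mul_comm] using congrFun (hMv j) i
  refine ⟨hP.unit, ?_⟩
  rw [IsUnit.unit_spec, ← hMP, mul_nonsing_inv_cancel_right _ _ ((isUnit_iff_isUnit_det P).mp hP)]

theorem exists_units_mulVec_single_zero_eq {m : ℕ} {v : Fin (m + 1) → K} (hv : v ≠ 0) :
    ∃ P : (Matrix (Fin (m + 1)) (Fin (m + 1)) K)ˣ, P.val *ᵥ Pi.single 0 1 = v := by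
  obtain ⟨i₀, hi₀⟩ := Function.ne_iff.mp hv
  set Q : Matrix (Fin (m + 1)) (Fin (m + 1)) K :=
    ((1 : Matrix _ _ K).updateCol i₀ v).submatrix id (Equiv.swap 0 i₀)
  have hQ : IsUnit Q.det := by
    have hv_sum : v = fun k => ∑ i, v i • (1 : Matrix _ _ K) k i := by
      ext k; simp [one_apply]
    rw [det_permute', hv_sum, det_updateCol_sum, det_one, smul_eq_mul, mul_one]
    exact ((Equiv.Perm.sign _).isUnit.map (Int.castRingHom K)).mul hi₀.isUnit
  refine ⟨((isUnit_iff_isUnit_det Q).mpr hQ).unit, ?_⟩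
  ext i
  simp [Q]

theorem exists_units_inv_mul_mul_apply_zero_eq_zero [IsAlgClosed K] {m : ℕ}
    (M : Matrix (Fin (m + 1)) (Fin (m + 1)) K) :
    ∃ P : (Matrix (Fin (m + 1)) (Fin (m + 1)) K)ˣ, ∀ i ≠ 0, (P.val⁻¹ * M * P.val) i 0 = 0 := by
  obtain ⟨μ, hμ⟩ := Module.End.exists_eigenvalue (toLin' M)
  obtain ⟨v, hv⟩ := hμ.exists_hasEigenvector
  obtain ⟨P, hP⟩ := exists_units_mulVec_single_zero_eq hv.2
  refine ⟨P, fun i hi => ?_⟩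
  have hMv : M *ᵥ v = μ • v := by simpa using hv.apply_eq_smul
  have hcol : (P.val⁻¹ * M * P.val) *ᵥ Pi.single 0 1 = μ • Pi.single 0 1 := by
    rw [← mulVec_mulVec, hP, ← mulVec_mulVec, hMv, mulVec_smul, ← hP, mulVec_mulVec,
      nonsing_inv_mul _ ((isUnit_iff_isUnit_det _).mp P.isUnit), one_mulVec]
  simpa [mulVec_single_one, hi] using congrFun hcol i

end Diagonalization

section BlockTriangular

variable {R : Type*} [CommRing R] {m : ℕ}

/-- The block matrix `!![a, r; 0, B]`. -/
def blockTriangularCons (a : R) (r : Fin m → R) (B : Matrix (Fin m) (Fin m) R) :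
    Matrix (Fin (m + 1)) (Fin (m + 1)) R :=
  Matrix.of (Fin.cons (Fin.cons a r) fun i => Fin.cons 0 (B i))

theorem charpoly_blockTriangularCons (a : R) (r : Fin m → R) (B : Matrix (Fin m) (Fin m) R) :
    (blockTriangularCons a r B).charpoly = (X - C a) * B.charpoly := by
  rw [charpoly, det_succ_column_zero, Fintype.sum_eq_single 0]
  · have hsub : (charmatrix (blockTriangularCons a r B)).submatrix Fin.succ Fin.succ
        = charmatrix B := by
      ext i j
      by_cases hij : i = j
      · subst hij; simp [blockTriangularCons]
      · simp [blockTriangularCons, hij]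
    rw [Fin.succAbove_zero, hsub]
    simp [blockTriangularCons, charpoly]
  · intro i hi
    obtain ⟨i, rfl⟩ := Fin.exists_succ_eq.mpr hi
    simp [blockTriangularCons]

theorem eq_blockTriangularCons {N : Matrix (Fin (m + 1)) (Fin (m + 1)) R}
    (hN : ∀ i ≠ 0, N i 0 = 0) :
    N = blockTriangularCons (N 0 0) (fun j => N 0 j.succ) (N.submatrix Fin.succ Fin.succ) := by
  ext i j
  cases i using Fin.cases <;> cases j using Fin.cases <;>
    simp [blockTriangularCons, hN _ (Fin.succ_ne_zero _)]

theorem continuous_blockTriangularCons [TopologicalSpace R] (r : Fin m → R) :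
    Continuous fun p : R × Matrix (Fin m) (Fin m) R => blockTriangularCons p.1 r p.2 := by
  refine continuous_pi fun i => continuous_pi fun j => ?_
  cases i using Fin.cases <;> cases j using Fin.cases <;>
    simp only [blockTriangularCons, Matrix.of_apply, Fin.cons_zero, Fin.cons_succ] <;> fun_prop

end BlockTriangular

theorem dense_of_dense_fibers {X Y : Type*} [TopologicalSpace X] [TopologicalSpace Y]
    {s : Set Y} {t : Set (X × Y)} (hs : Dense s) (ht : ∀ y ∈ s, Dense {x | (x, y) ∈ t}) :
    Dense t := by
  rintro ⟨x, y⟩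
  have hfib : (x, ·) '' s ⊆ closure t := Set.image_subset_iff.mpr fun y' hy' =>
    map_mem_closure (f := (·, y')) (continuous_id.prodMk continuous_const) (ht y' hy' x)
      fun _ h => h
  exact closure_minimal hfib isClosed_closure
    (map_mem_closure (continuous_const.prodMk continuous_id) (hs y) (Set.mapsTo_image _ _))

section Density

variable {K : Type*} [NontriviallyNormedField K] [IsAlgClosed K]

def simpleSpectrumOutside (F : Set K) (m : ℕ) : Set (Matrix (Fin m) (Fin m) K) :=
  {M | ∃ d : Fin m → K, Function.Injective d ∧ (∀ i, d i ∉ F) ∧ M.charpoly = ∏ i, (X - C (d i))}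

theorem dense_simpleSpectrumOutside {F : Set K} (hF : F.Finite) (m : ℕ) :
    Dense (simpleSpectrumOutside F m) := by
  induction m with
  | zero =>
    convert dense_univ
    refine Set.eq_univ_of_forall fun M => ⟨finZeroElim, fun a => a.elim0, fun i => i.elim0, ?_⟩
    simp [charpoly]
  | succ m ih =>
    intro M
    obtain ⟨P, hP⟩ := exists_units_inv_mul_mul_apply_zero_eq_zero M
    set N := P.val⁻¹ * M * P.val
    have hMN : P.val * N * P.val⁻¹ = M := by
      simp [N, ← mul_assoc]
    suffices hN : N ∈ closure (simpleSpectrumOutside F (m + 1)) from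
      hMN ▸ map_mem_closure (f := fun N => P.val * N * P.val⁻¹)
        ((continuous_const.matrix_mul continuous_id).matrix_mul continuous_const) hN
        fun N' ⟨d, hd, hdF, hN'⟩ => ⟨d, hd, hdF, by rwa [charpoly_units_conj]⟩
    -- `N = !![λ, r; 0, B]`: perturb `B` inductively, then `λ` off `F` and the spectrum of `B`
    let T : Set (K × Matrix (Fin m) (Fin m) K) := {p | ∃ d : Fin m → K, Function.Injective d ∧
      (∀ i, d i ∉ F) ∧ p.2.charpoly = ∏ i, (X - C (d i)) ∧ p.1 ∉ F ∪ Set.range d}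
    have hT : Dense T := dense_of_dense_fibers ih fun B ⟨d, hd, hdF, hB⟩ =>
      (dense_univ.sdiff_finite (hF.union (Set.finite_range d))).mono
        fun a ha => ⟨d, hd, hdF, hB, ha.2⟩
    rw [eq_blockTriangularCons hP]
    refine map_mem_closure (f := fun p => blockTriangularCons p.1 _ p.2)
      (continuous_blockTriangularCons _) (hT (N 0 0, N.submatrix Fin.succ Fin.succ)) ?_
    rintro ⟨a, B⟩ ⟨d, hd, hdF, hB, ha⟩
    simp only [Set.mem_union, not_or] at ha
    refine ⟨Fin.cons a d, Fin.cons_injective_iff.mpr ⟨ha.2, hd⟩, Fin.cases ha.1 hdF, ?_⟩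
    rw [charpoly_blockTriangularCons, hB, Fin.prod_univ_succ]
    simp

theorem dense_setOf_eq_mul_diagonal_mul_inv (m : ℕ) :
    Dense {M : Matrix (Fin m) (Fin m) K | ∃ (P : (Matrix (Fin m) (Fin m) K)ˣ) (d : Fin m → K),
      (∀ i, d i ≠ 0) ∧ M = P.val * diagonal d * P.val⁻¹} := by
  refine (dense_simpleSpectrumOutside (Set.finite_singleton 0) m).mono ?_
  rintro M ⟨d, hd, hd0, hM⟩
  obtain ⟨P, hP⟩ := exists_units_eq_mul_diagonal_mul_inv M hd hM
  exact ⟨P, d, hd0, hP⟩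

theorem dense_setOf_tensorRank_eq (n : ℕ) :
    Dense {A : Fin n → Fin n → Fin 2 → K | tensorRank A = n} := by
  have hD := dense_setOf_eq_mul_diagonal_mul_inv (K := K) n
  have hunit (P : (Matrix (Fin n) (Fin n) K)ˣ) (d : Fin n → K) (hd : ∀ i, d i ≠ 0) :
      IsUnit (P.val * diagonal d * P.val⁻¹) :=
    (P.isUnit.mul (isUnit_diagonal.mpr (Pi.isUnit_iff.mpr fun i => (hd i).isUnit))).mul
      (isUnit_nonsing_inv_iff.mpr P.isUnit)
  have hslices : Continuous fun p : Matrix (Fin n) (Fin n) K × Matrix (Fin n) (Fin n) K =>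
      ofSlices p.1 p.2 := by
    refine continuous_pi fun i => continuous_pi fun j => continuous_pi fun k => ?_
    fin_cases k <;> simp [ofSlices] <;> fun_prop
  have hslices_surj : Function.Surjective fun p : Matrix (Fin n) (Fin n) K ×
      Matrix (Fin n) (Fin n) K => ofSlices p.1 p.2 := fun A =>
    ⟨(frontalSlice A 0, frontalSlice A 1), eq_of_frontalSlice_eq fun k => by fin_cases k <;> rfl⟩
  set Φ := fun p : Matrix (Fin n) (Fin n) K × Matrix (Fin n) (Fin n) K =>
    ofSlices (p.2 * p.1) p.2
  have hΦ : Continuous Φ :=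
    hslices.comp ((continuous_snd.matrix_mul continuous_fst).prodMk continuous_snd)
  have hΦ_range : DenseRange Φ := by
    refine (hslices_surj.denseRange.dense_image hslices (dense_univ.prod hD)).mono ?_
    rintro _ ⟨⟨X, Y⟩, ⟨-, P, d, hd, hY⟩, rfl⟩
    have hYdet : IsUnit Y.det := by
      rw [← isUnit_iff_isUnit_det, show Y = _ from hY]
      exact hunit P d hd
    exact ⟨(Y⁻¹ * X, Y), by simp [Φ, ← Matrix.mul_assoc, mul_nonsing_inv _ hYdet]⟩
  refine (hΦ_range.dense_image hΦ (hD.prod hD)).mono ?_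
  rintro _ ⟨⟨M, Y⟩, ⟨⟨P, d, -, rfl⟩, ⟨Q, e, he, rfl⟩⟩, rfl⟩
  exact tensorRank_ofSlices_mul_eq (hunit Q e he) P d

end Density

theorem Seminorm.continuous_of_finiteDimensional {E : Type*} [NormedAddCommGroup E]
    [NormedSpace ℂ E] [FiniteDimensional ℂ E] (p : Seminorm ℂ E) : Continuous p :=
  p.convexOn.locallyLipschitz.continuous

theorem sInf_dist_to_rank_n_tensors_eq_zero_general
    {n : ℕ} (A : Fin n → Fin n → Fin 2 → ℂ)
    (nrm : Seminorm ℂ (Fin n → Fin n → Fin 2 → ℂ)) :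
    sInf {d : ℝ | ∃ B : Fin n → Fin n → Fin 2 → ℂ, tensorRank B = n ∧ d = nrm (A - B)} = 0 := by
  set S := {d : ℝ | ∃ B : Fin n → Fin n → Fin 2 → ℂ, tensorRank B = n ∧ d = nrm (A - B)}
  have hcont : Continuous fun B => nrm (A - B) :=
    nrm.continuous_of_finiteDimensional.comp (continuous_const.sub continuous_id)
  have h0 : (0 : ℝ) ∈ closure S := by
    simpa using map_mem_closure hcont (dense_setOf_tensorRank_eq n A) (t := S)
      fun B hB => ⟨B, hB, rfl⟩
  refine (isGLB_of_mem_closure ?_ h0).csInf_eq (closure_nonempty_iff.mp ⟨0, h0⟩)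
  rintro _ ⟨B, -, rfl⟩
  exact apply_nonneg nrm _

/-- Let `n ≥ 2`, let `A ∈ ℂ^{n×n×2}` and let `‖·‖` be a norm on `ℂ^{n×n×2}` (modelled as a
`Seminorm` over `ℂ` which vanishes only at `0`). Then
`inf { ‖A − B‖ : B ∈ ℂ^{n×n×2}, rank(B) = n } = 0`: every tensor may be approximated
arbitrarily closely by tensors of tensor rank exactly `n`. -/
theorem sInf_dist_to_rank_n_tensors_eq_zero
    {n : ℕ} (hn : 2 ≤ n) (A : Fin n → Fin n → Fin 2 → ℂ)
    (nrm : Seminorm ℂ (Fin n → Fin n → Fin 2 → ℂ))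
    (hnrm : ∀ x, nrm x = 0 → x = 0) :
    sInf {d : ℝ | ∃ B : Fin n → Fin n → Fin 2 → ℂ, tensorRank B = n ∧ d = nrm (A - B)} = 0 :=
  sInf_dist_to_rank_n_tensors_eq_zero_general A nrm
end

section
/- For every n ∈ ℕ, n ≥ 1, there exist a tensor A ∈ ℂ^{2n×2n×2} with rank(A) = 3n and a sequence of tensors {A_k} ⊂ ℂ^{2n×2n×2}, k ∈ ℕ, such that rank(A_k) = 2n for every k and A_k → A as k → ∞ in the Euclidean topology (i.e., entrywise). -/
open Matrix Finset

/-!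
The limit is the pencil `A = (I, N)` with `N = !![0, 1; 0, 0] ⊗ Iₙ`, and `Aₖ = (I, Nₖ)` with
`Nₖ = !![0, 1; tₖ², 0] ⊗ Iₙ`, `tₖ → 0`. Since `Nₖ` is diagonalisable (eigenvalues `±tₖ`), `Aₖ` is
a sum of `2n` elementary tensors, one per eigenvector, while `A` is a sum of `3n`.

The lower bound `3n` is the substitution method: each of the `n` rows of `A` whose `N`-part
vanishes can be subtracted from the other rows at the cost of at least one elementary tensor,
and the tensor that remains still has an injective flattening, so its rank is at least `2n`.
-/

open Filter Topology
open scoped Kronecker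

variable {𝔽 : Type*} [Field 𝔽]

section TensorRank

variable {l m n : ℕ}

theorem exists_fin_eq_sum_elemT {ι : Type*} (s : Finset ι) (A : Fin l → Fin m → Fin n → 𝔽)
    (x : ι → Fin l → 𝔽) (y : ι → Fin m → 𝔽) (z : ι → Fin n → 𝔽)
    (h : A = ∑ i ∈ s, elemT (x i) (y i) (z i)) :
    ∃ (x' : Fin #s → Fin l → 𝔽) (y' : Fin #s → Fin m → 𝔽) (z' : Fin #s → Fin n → 𝔽),
      A = ∑ i : Fin #s, elemT (x' i) (y' i) (z' i) := by
  let e := s.equivFin.symm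
  refine ⟨fun i => x (e i), fun i => y (e i), fun i => z (e i), ?_⟩
  rw [h, ← s.sum_coe_sort, ← e.sum_comp]

theorem tensorRank_le_card_of_eq_sum {ι : Type*} (s : Finset ι) (A : Fin l → Fin m → Fin n → 𝔽)
    (x : ι → Fin l → 𝔽) (y : ι → Fin m → 𝔽) (z : ι → Fin n → 𝔽)
    (h : A = ∑ i ∈ s, elemT (x i) (y i) (z i)) :
    tensorRank A ≤ #s :=
  Nat.sInf_le (exists_fin_eq_sum_elemT s A x y z h)

theorem eq_sum_single_elemT (A : Fin l → Fin m → Fin n → 𝔽) :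
    A = ∑ pq : Fin l × Fin m, elemT (Pi.single pq.1 1) (Pi.single pq.2 1) (A pq.1 pq.2) := by
  ext p q s
  simp [elemT, Finset.sum_apply, Fintype.sum_prod_type, Pi.single_apply]

theorem exists_eq_sum_elemT (A : Fin l → Fin m → Fin n → 𝔽) :
    ∃ (x : Fin (tensorRank A) → Fin l → 𝔽) (y : Fin (tensorRank A) → Fin m → 𝔽)
      (z : Fin (tensorRank A) → Fin n → 𝔽),
      A = ∑ i : Fin (tensorRank A), elemT (x i) (y i) (z i) :=
  Nat.sInf_mem (s := {r | ∃ (x : Fin r → Fin l → 𝔽) (y : Fin r → Fin m → 𝔽)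
    (z : Fin r → Fin n → 𝔽), A = ∑ i : Fin r, elemT (x i) (y i) (z i)})
    ⟨_, exists_fin_eq_sum_elemT _ A _ _ _ (eq_sum_single_elemT A)⟩

theorem le_tensorRank_of_flattening_injective (A : Fin l → Fin m → Fin n → 𝔽)
    (h : ∀ v : Fin m → 𝔽, (∀ p s, ∑ q, A p q s * v q = 0) → v = 0) :
    m ≤ tensorRank A := by
  obtain ⟨x, y, z, hA⟩ := exists_eq_sum_elemT A
  have hinj : Function.Injective (Matrix.of y).mulVecLin := by
    refine (injective_iff_map_eq_zero _).2 fun v hv => h v fun p s => ?_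
    have hy : ∀ i, ∑ q, y i q * v q = 0 := fun i => congrFun hv i
    calc ∑ q, A p q s * v q = ∑ i, x i p * z i s * ∑ q, y i q * v q := by
          simp only [hA, Finset.sum_apply, elemT, Finset.sum_mul, Finset.mul_sum]
          rw [Finset.sum_comm]
          refine Finset.sum_congr rfl fun i _ => Finset.sum_congr rfl fun q _ => by ring
      _ = 0 := by simp [hy]
  simpa using LinearMap.finrank_le_finrank_of_injective hinj

theorem exists_tensorRank_sub_row_lt (T : Fin l → Fin m → Fin n → 𝔽) (a : Fin l) (ha : T a ≠ 0) :
    ∃ c : Fin l → 𝔽, tensorRank (fun p q s => T p q s - c p * T a q s) < tensorRank T := by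
  obtain ⟨x, y, z, hT⟩ := exists_eq_sum_elemT T
  obtain ⟨i₀, hi₀⟩ : ∃ i₀, x i₀ a ≠ 0 := by
    by_contra! hx
    exact ha (by ext q s; simp [hT, Finset.sum_apply, elemT, hx])
  refine ⟨fun p => x i₀ p / x i₀ a, ?_⟩
  -- `c` is chosen so that the `i₀`-th term of the decomposition cancels
  have hsub : (fun p q s => T p q s - x i₀ p / x i₀ a * T a q s) =
      ∑ i ∈ univ.erase i₀, elemT (fun p => x i p - x i a * (x i₀ p / x i₀ a)) (y i) (z i) := by
    ext p q s
    have hi₀_zero : x i₀ p - x i₀ a * (x i₀ p / x i₀ a) = 0 := by field_simp; ring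
    calc T p q s - x i₀ p / x i₀ a * T a q s
        = ∑ i, (x i p - x i a * (x i₀ p / x i₀ a)) * y i q * z i s := by
          simp only [hT, Finset.sum_apply, elemT, Finset.mul_sum, ← Finset.sum_sub_distrib]
          exact Finset.sum_congr rfl fun i _ => by ring
      _ = _ := by
          rw [← Finset.add_sum_erase _ _ (mem_univ i₀), hi₀_zero]
          simp [Finset.sum_apply, elemT]
  calc tensorRank _ ≤ #(univ.erase i₀) := tensorRank_le_card_of_eq_sum _ _ _ _ _ hsub
    _ < tensorRank T := by
      rw [card_erase_of_mem (mem_univ i₀), card_univ, Fintype.card_fin]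
      exact Nat.sub_lt i₀.pos one_pos

end TensorRank

section Pencil

variable {l m : ℕ}

def pencil (M N : Matrix (Fin l) (Fin m) 𝔽) : Fin l → Fin m → Fin 2 → 𝔽 :=
  fun p q s => ![M, N] s p q

theorem pencil_sub_row (M N : Matrix (Fin l) (Fin m) 𝔽) (c : Fin l → 𝔽) (a : Fin l) :
    (fun p q s => pencil M N p q s - c p * pencil M N a q s) =
      pencil (M - vecMulVec c (M a)) (N - vecMulVec c (N a)) := by
  ext p q s
  fin_cases s <;> simp [pencil, vecMulVec_apply]

theorem le_tensorRank_pencil (M N : Matrix (Fin l) (Fin m) 𝔽)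
    (h : ∀ v, M *ᵥ v = 0 → N *ᵥ v = 0 → v = 0) :
    m ≤ tensorRank (pencil M N) := by
  refine le_tensorRank_of_flattening_injective _ fun v hv => h v ?_ ?_ <;>
    ext p
  · simpa [pencil, mulVec, dotProduct] using hv p 0
  · simpa [pencil, mulVec, dotProduct] using hv p 1

theorem tensorRank_pencil_le {ι : Type*} [Fintype ι] [DecidableEq ι] (P : Matrix (Fin l) ι 𝔽)
    (Q : Matrix ι (Fin m) 𝔽) (a b : ι → 𝔽) :
    tensorRank (pencil (P * diagonal a * Q) (P * diagonal b * Q)) ≤ Fintype.card ι := by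
  refine tensorRank_le_card_of_eq_sum univ _ (fun i p => P p i) (fun i q => Q i q)
    (fun i => ![a i, b i]) ?_
  ext p q s
  fin_cases s <;>
    simp [pencil, elemT, Finset.sum_apply, mul_apply, diagonal_apply, mul_right_comm]

end Pencil

section SubstitutionBound

variable {m : ℕ} (N : Matrix (Fin m) (Fin m) 𝔽) (B : Finset (Fin m))

theorem add_card_le_tensorRank_pencil_one_add (hrow : ∀ a ∈ B, N a = 0)
    (hker : ∀ v, N *ᵥ v = 0 → ∀ q ∈ B, v q = 0) (F : Finset (Fin m)) (hFB : F ⊆ B)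
    (D : Matrix (Fin m) (Fin m) 𝔽) (hD : ∀ p q, q ∉ B \ F → D p q = 0) :
    m + #F ≤ tensorRank (pencil (1 + D) N) := by
  induction F using Finset.induction_on generalizing D with
  | empty =>
    rw [card_empty, add_zero]
    refine le_tensorRank_pencil _ _ fun v hv hNv => ?_
    have hDv : D *ᵥ v = 0 := by
      ext p
      simp only [mulVec, dotProduct, Pi.zero_apply]
      refine Finset.sum_eq_zero fun q _ => ?_
      by_cases hq : q ∈ B
      · simp [hker v hNv q hq]
      · simp [hD p q (by simpa using hq)]
    rwa [add_mulVec, one_mulVec, hDv, add_zero] at hv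
  | insert a F haF ih =>
    have haB : a ∈ B := hFB (mem_insert_self a F)
    have hrow_a : pencil (1 + D) N a ≠ 0 := fun h => by
      simpa [pencil, hD a a (by simp)] using congrFun (congrFun h a) 0
    obtain ⟨c, hc⟩ := exists_tensorRank_sub_row_lt _ a hrow_a
    -- row `a` of `N` vanishes, so the substitution keeps the shape `pencil (1 + D') N`
    rw [pencil_sub_row, hrow a haB, vecMulVec_zero, sub_zero, add_sub_assoc] at hc
    have hrank := ih ((insert_subset_iff.1 hFB).2) (D - vecMulVec c ((1 + D) a)) fun p q hq => by
      have hqa : q ≠ a := by rintro rfl; exact hq (by simp [haB, haF])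
      simp [vecMulVec_apply, hD p q (by simp_all), hD a q (by simp_all), one_apply, hqa.symm]
    rw [card_insert_of_notMem haF]
    omega

theorem add_card_le_tensorRank_pencil_one (hrow : ∀ a ∈ B, N a = 0)
    (hker : ∀ v, N *ᵥ v = 0 → ∀ q ∈ B, v q = 0) :
    m + #B ≤ tensorRank (pencil 1 N) := by
  simpa using add_card_le_tensorRank_pencil_one_add N B hrow hker B subset_rfl 0 (by simp)

end SubstitutionBound

section Ampliation

def ampliate {k k' : ℕ} (K : Matrix (Fin k) (Fin k') 𝔽) (n : ℕ) :
    Matrix (Fin (k * n)) (Fin (k' * n)) 𝔽 :=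
  (K ⊗ₖ (1 : Matrix (Fin n) (Fin n) 𝔽)).submatrix finProdFinEquiv.symm finProdFinEquiv.symm

variable {k n : ℕ}

@[simp]
theorem ampliate_apply_finProdFinEquiv {k' : ℕ} (K : Matrix (Fin k) (Fin k') 𝔽) (i : Fin k)
    (j : Fin n) (i' : Fin k') (j' : Fin n) :
    ampliate K n (finProdFinEquiv (i, j)) (finProdFinEquiv (i', j')) =
      K i i' * (1 : Matrix (Fin n) (Fin n) 𝔽) j j' := by
  simp [ampliate]

@[simp]
theorem ampliate_one : ampliate (1 : Matrix (Fin k) (Fin k) 𝔽) n = 1 := by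
  simp [ampliate]

theorem ampliate_mul_diagonal_mul {ι : Type*} [Fintype ι] [DecidableEq ι]
    (P : Matrix (Fin k) ι 𝔽) (Q : Matrix ι (Fin k) 𝔽) (a : ι → 𝔽) :
    ampliate (P * diagonal a * Q) n =
      (P ⊗ₖ (1 : Matrix (Fin n) (Fin n) 𝔽)).submatrix finProdFinEquiv.symm id *
        diagonal (fun i : ι × Fin n => a i.1) *
          (Q ⊗ₖ (1 : Matrix (Fin n) (Fin n) 𝔽)).submatrix id finProdFinEquiv.symm := by
  have hdiag : diagonal a ⊗ₖ (1 : Matrix (Fin n) (Fin n) 𝔽) = diagonal fun i => a i.1 := by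
    rw [← diagonal_one, diagonal_kronecker_diagonal]
    simp_rw [mul_one]
  calc ampliate (P * diagonal a * Q) n
      = (P ⊗ₖ (1 : Matrix (Fin n) (Fin n) 𝔽) * diagonal a ⊗ₖ (1 : Matrix (Fin n) (Fin n) 𝔽) *
          Q ⊗ₖ (1 : Matrix (Fin n) (Fin n) 𝔽)).submatrix
            finProdFinEquiv.symm finProdFinEquiv.symm := by
        simp only [ampliate, ← mul_kronecker_mul, mul_one]
    _ = _ := by
        rw [hdiag, submatrix_mul _ _ _ id _ Function.bijective_id,
          submatrix_mul _ _ _ id _ Function.bijective_id, submatrix_id_id]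

theorem tensorRank_pencil_ampliate_le {ι : Type*} [Fintype ι] [DecidableEq ι]
    (P : Matrix (Fin k) ι 𝔽) (Q : Matrix ι (Fin k) 𝔽) (a b : ι → 𝔽) :
    tensorRank (pencil (ampliate (P * diagonal a * Q) n) (ampliate (P * diagonal b * Q) n)) ≤
      Fintype.card ι * n := by
  rw [ampliate_mul_diagonal_mul, ampliate_mul_diagonal_mul]
  simpa only [Fintype.card_prod, Fintype.card_fin] using
    tensorRank_pencil_le _ _ (fun i : ι × Fin n => a i.1) (fun i => b i.1)

end Ampliation

section JordanPencil

variable (n : ℕ)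

theorem tensorRank_pencil_one_ampliate_nilpotent :
    tensorRank (pencil 1 (ampliate !![(0 : 𝔽), 1; 0, 0] n)) = 3 * n := by
  apply le_antisymm
  · -- `I = e₀e₀ᵀ + e₁e₁ᵀ` and `!![0, 1; 0, 0] = e₀e₁ᵀ`
    have hI : !![(1 : 𝔽), 0, 1; 0, 1, 0] * diagonal ![(1 : 𝔽), 1, 0] *
        !![(1 : 𝔽), 0; 0, 1; 0, 1] = 1 := by
      ext i j; fin_cases i <;> fin_cases j <;>
        simp [mul_apply, vecMul_diagonal, Fin.sum_univ_succ]
    have hN : !![(1 : 𝔽), 0, 1; 0, 1, 0] * diagonal ![(0 : 𝔽), 0, 1] *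
        !![(1 : 𝔽), 0; 0, 1; 0, 1] = !![0, 1; 0, 0] := by
      ext i j; fin_cases i <;> fin_cases j <;>
        simp [mul_apply, vecMul_diagonal, Fin.sum_univ_succ]
    have := tensorRank_pencil_ampliate_le (n := n) !![(1 : 𝔽), 0, 1; 0, 1, 0]
      !![(1 : 𝔽), 0; 0, 1; 0, 1] ![1, 1, 0] ![0, 0, 1]
    rwa [hI, hN, ampliate_one, Fintype.card_fin] at this
  · let B := univ.image fun j : Fin n => finProdFinEquiv ((1 : Fin 2), j)
    have hB : #B = n := by
      rw [card_image_of_injective _ fun j j' h => by simpa using h, card_univ, Fintype.card_fin]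
    have hrow : ∀ a ∈ B, ampliate !![(0 : 𝔽), 1; 0, 0] n a = 0 := by
      intro a ha
      obtain ⟨j, -, rfl⟩ := mem_image.1 ha
      ext q
      obtain ⟨⟨i', j'⟩, rfl⟩ := finProdFinEquiv.surjective q
      fin_cases i' <;> simp
    have hker : ∀ v, ampliate !![(0 : 𝔽), 1; 0, 0] n *ᵥ v = 0 → ∀ q ∈ B, v q = 0 := by
      intro v hv q hq
      obtain ⟨j, -, rfl⟩ := mem_image.1 hq
      simpa [mulVec, dotProduct, ← finProdFinEquiv.sum_comp, Fintype.sum_prod_type,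
        Fin.sum_univ_two, one_apply] using congrFun hv (finProdFinEquiv (0, j))
    have := add_card_le_tensorRank_pencil_one _ B hrow hker
    omega

theorem tensorRank_pencil_one_ampliate_of_ne_zero (h2 : (2 : 𝔽) ≠ 0) {t : 𝔽} (ht : t ≠ 0) :
    tensorRank (pencil 1 (ampliate !![0, 1; t ^ 2, 0] n)) = 2 * n := by
  apply le_antisymm
  · -- the columns `(1, ±t)` of `P` are eigenvectors of `!![0, 1; t ^ 2, 0]`, and `Q = P⁻¹`
    have hI : !![1, 1; t, -t] * diagonal ![1, 1] * !![2⁻¹, (2 * t)⁻¹; 2⁻¹, -(2 * t)⁻¹] = 1 := by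
      ext i j; fin_cases i <;> fin_cases j <;>
        simp [mul_apply, vecMul_diagonal, Fin.sum_univ_succ] <;> field_simp <;> ring
    have hN : !![1, 1; t, -t] * diagonal ![t, -t] * !![2⁻¹, (2 * t)⁻¹; 2⁻¹, -(2 * t)⁻¹] =
        !![0, 1; t ^ 2, 0] := by
      ext i j; fin_cases i <;> fin_cases j <;>
        simp [mul_apply, vecMul_diagonal, Fin.sum_univ_succ] <;> field_simp <;> ring
    have := tensorRank_pencil_ampliate_le (n := n) !![1, 1; t, -t]
      !![2⁻¹, (2 * t)⁻¹; 2⁻¹, -(2 * t)⁻¹] ![1, 1] ![t, -t]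
    rwa [hI, hN, ampliate_one, Fintype.card_fin] at this
  · exact le_tensorRank_pencil _ _ fun v hv _ => by simpa using hv

end JordanPencil

theorem continuous_pencil_one_ampliate [TopologicalSpace 𝔽] [ContinuousMul 𝔽] (n : ℕ) :
    Continuous fun t : 𝔽 => pencil 1 (ampliate !![0, 1; t, 0] n) := by
  refine continuous_pi fun p => continuous_pi fun q => continuous_pi fun s => ?_
  obtain ⟨⟨i, j⟩, rfl⟩ := finProdFinEquiv.surjective p
  obtain ⟨⟨i', j'⟩, rfl⟩ := finProdFinEquiv.surjective q
  fin_cases s <;> fin_cases i <;> fin_cases i' <;> simp [pencil] <;> fun_prop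

theorem exists_rank_threeN_tensor_limit_of_rank_twoN_general
    (n : ℕ) :
    ∃ (A : Fin (2 * n) → Fin (2 * n) → Fin 2 → ℂ)
      (Aseq : ℕ → Fin (2 * n) → Fin (2 * n) → Fin 2 → ℂ),
      tensorRank A = 3 * n ∧
      (∀ k, tensorRank (Aseq k) = 2 * n) ∧
      Filter.Tendsto Aseq Filter.atTop (nhds A) := by
  let t : ℕ → ℂ := fun k => 1 / ((k : ℂ) + 1)
  have ht : Tendsto (fun k => t k ^ 2) atTop (𝓝 0) := by
    simpa only [zero_pow two_ne_zero] using
      (tendsto_one_div_add_atTop_nhds_zero_nat (𝕜 := ℂ)).pow 2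
  refine ⟨pencil 1 (ampliate !![0, 1; 0, 0] n),
    fun k => pencil 1 (ampliate !![0, 1; t k ^ 2, 0] n),
    tensorRank_pencil_one_ampliate_nilpotent n, fun k => ?_, ?_⟩
  · exact tensorRank_pencil_one_ampliate_of_ne_zero n two_ne_zero
      (one_div_ne_zero (Nat.cast_add_one_ne_zero k))
  · exact ((continuous_pencil_one_ampliate n).tendsto 0).comp ht

/-- For every `n ≥ 1` there exist a tensor `A ∈ ℂ^{2n×2n×2}` with `rank(A) = 3n` and a
sequence of tensors `A_k`, each of tensor rank `2n`, converging to `A` in the Euclidean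
(entrywise) topology. -/
theorem exists_rank_threeN_tensor_limit_of_rank_twoN
    (n : ℕ) (hn : 1 ≤ n) :
    ∃ (A : Fin (2 * n) → Fin (2 * n) → Fin 2 → ℂ)
      (Aseq : ℕ → Fin (2 * n) → Fin (2 * n) → Fin 2 → ℂ),
      tensorRank A = 3 * n ∧
      (∀ k, tensorRank (Aseq k) = 2 * n) ∧
      Filter.Tendsto Aseq Filter.atTop (nhds A) :=
  exists_rank_threeN_tensor_limit_of_rank_twoN_general n
end

section
/- Let n, m ≥ 2. There exists r ∈ ℕ such that the set S_r(n,n,2) = { B ∈ ℂ^{n×n×2} : rank(B) ≤ r } of tensors of tensor rank at most r is not closed in the Euclidean topology; in particular the tensor rank is not upper semicontinuous on ℂ^{n×n×2} for n ≥ 2. -/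
open Matrix Finset

/- ### Auxiliary material -/

namespace TensorNotClosedAux

/-- first standard basis vector of `ℂ^n` -/
def u0 {n : ℕ} : Fin n → ℂ := fun i => if (i : ℕ) = 0 then 1 else 0

/-- second standard basis vector of `ℂ^n` -/
def u1 {n : ℕ} : Fin n → ℂ := fun i => if (i : ℕ) = 1 then 1 else 0

/-- first standard basis vector of `ℂ^2` -/
def v0 : Fin 2 → ℂ := fun s => if (s : ℕ) = 0 then 1 else 0

/-- second standard basis vector of `ℂ^2` -/
def v1 : Fin 2 → ℂ := fun s => if (s : ℕ) = 1 then 1 else 0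

/-- the W-tensor `e0⊗e0⊗ε1 + e0⊗e1⊗ε0 + e1⊗e0⊗ε0` embedded in `ℂ^{n×n×2}` -/
def ww (n : ℕ) : Fin n → Fin n → Fin 2 → ℂ :=
  fun p q s => u0 p * u0 q * v1 s + u0 p * u1 q * v0 s + u1 p * u0 q * v0 s

/-- zero-padding of a tuple -/
def pad {α : Type*} [Zero α] {r : ℕ} (x : Fin r → α) : ℕ → α :=
  fun i => if h : i < r then x ⟨i, h⟩ else 0

/-- scalar sequence `1/(k+1)` in `ℂ` -/
noncomputable def tC (k : ℕ) : ℂ := ((k : ℂ) + 1)⁻¹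

lemma tC_ne (k : ℕ) : tC k ≠ 0 := by
  have h : ((k : ℂ) + 1) ≠ 0 := by
    have h2 : ((k + 1 : ℕ) : ℂ) ≠ 0 := Nat.cast_ne_zero.mpr (Nat.succ_ne_zero k)
    push_cast at h2; exact h2
  simp [tC, h]

/-- the approximating sequence: `ww + t·(e0⊗e1⊗ε1 + e1⊗e0⊗ε1 + e1⊗e1⊗ε0) + t²·e1⊗e1⊗ε1` -/
noncomputable def bb (n k : ℕ) : Fin n → Fin n → Fin 2 → ℂ :=
  fun p q s => ww n p q s
    + tC k * (u0 p * u1 q * v1 s + u1 p * u0 q * v1 s + u1 p * u1 q * v0 s)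
    + (tC k) ^ 2 * (u1 p * u1 q * v1 s)

/-- The core algebraic fact: the 2×2×2 W-tensor has no rank-2 decomposition. -/
lemma key2 (a₀ a₁ b₀ b₁ c₀ c₁ d₀ d₁ e₀ e₁ f₀ f₁ : ℂ)
    (h000 : a₀*b₀*c₀ + d₀*e₀*f₀ = 0)
    (h001 : a₀*b₀*c₁ + d₀*e₀*f₁ = 1)
    (h010 : a₀*b₁*c₀ + d₀*e₁*f₀ = 1)
    (h011 : a₀*b₁*c₁ + d₀*e₁*f₁ = 0)
    (h100 : a₁*b₀*c₀ + d₁*e₀*f₀ = 1)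
    (h101 : a₁*b₀*c₁ + d₁*e₀*f₁ = 0)
    (h110 : a₁*b₁*c₀ + d₁*e₁*f₀ = 0)
    (h111 : a₁*b₁*c₁ + d₁*e₁*f₁ = 0) : False := by
  have det : ∀ s t : ℂ,
      (s*c₁+t*c₀) * (s*f₁+t*f₀) * ((a₀*d₁ - a₁*d₀) * (b₀*e₁ - b₁*e₀)) = -t^2 := by
    intro s t
    linear_combination (a₀*b₀*(s*c₁+t*c₀)+d₀*e₀*(s*f₁+t*f₀))*(s*h111+t*h110)
      - (a₀*b₁*(s*c₁+t*c₀)+d₀*e₁*(s*f₁+t*f₀))*(s*h101+t*h100) - t*(s*h011+t*h010)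
  set K := (a₀*d₁ - a₁*d₀) * (b₀*e₁ - b₁*e₀) with hKdef
  have h1 : c₁*f₁*K = 0 := by linear_combination det 1 0
  have h2 : c₀*f₀*K = -1 := by linear_combination det 0 1
  have h5 : (c₁*f₀+c₀*f₁)*K = 0 := by linear_combination det 1 1 - det 0 1 - det 1 0
  have hK : K ≠ 0 := by
    intro h
    have h2x := h2
    rw [h] at h2x
    simp at h2x
  have hc0 : c₀ ≠ 0 := by
    intro h
    have h2x := h2
    rw [h] at h2x
    simp at h2x
  have hf0 : f₀ ≠ 0 := by
    intro h
    have h2x := h2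
    rw [h] at h2x
    simp at h2x
  have hcf : c₁ * f₁ = 0 := by
    rcases mul_eq_zero.mp h1 with h | h
    · exact h
    · exact absurd h hK
  have hsum : c₁*f₀ + c₀*f₁ = 0 := by
    rcases mul_eq_zero.mp h5 with h | h
    · exact h
    · exact absurd h hK
  have hboth : c₁ = 0 ∧ f₁ = 0 := by
    rcases mul_eq_zero.mp hcf with hc1 | hf1
    · refine ⟨hc1, ?_⟩
      have h6 : c₀ * f₁ = 0 := by linear_combination hsum - f₀ * hc1
      exact (mul_eq_zero.mp h6).resolve_left hc0
    · refine ⟨?_, hf1⟩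
      have h6 : c₁ * f₀ = 0 := by linear_combination hsum - c₀ * hf1
      exact (mul_eq_zero.mp h6).resolve_right hf0
  obtain ⟨hc1, hf1⟩ := hboth
  rw [hc1, hf1] at h001
  simp at h001

/-- The W-tensor has tensor rank at least 3. -/
lemma ww_not_rank_le_two {n : ℕ} (hn : 2 ≤ n) : ¬ tensorRank (ww n) ≤ 2 := by
  intro hle
  have h3mem : (3 : ℕ) ∈ {r : ℕ | ∃ (x : Fin r → Fin n → ℂ) (y : Fin r → Fin n → ℂ)
      (z : Fin r → Fin 2 → ℂ), ww n = ∑ i : Fin r, fun p q s => x i p * y i q * z i s} := by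
    refine ⟨![u0, u0, u1], ![u0, u1, u0], ![v1, v0, v0], ?_⟩
    funext p q s
    simp only [ww, Finset.sum_apply, Fin.sum_univ_three, Matrix.cons_val_zero,
      Matrix.cons_val_one, Matrix.head_cons, Matrix.cons_val_two, Matrix.tail_cons]
  have hmem : tensorRank (ww n) ∈ {r : ℕ | ∃ (x : Fin r → Fin n → ℂ) (y : Fin r → Fin n → ℂ)
      (z : Fin r → Fin 2 → ℂ), ww n = ∑ i : Fin r, fun p q s => x i p * y i q * z i s} := by
    unfold tensorRank
    exact Nat.sInf_mem ⟨3, h3mem⟩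
  obtain ⟨x, y, z, hxyz⟩ := hmem
  have hentry : ∀ (p q : Fin n) (s : Fin 2),
      pad x 0 p * pad y 0 q * pad z 0 s + pad x 1 p * pad y 1 q * pad z 1 s = ww n p q s := by
    intro p q s
    have h1 : ww n p q s = ∑ i : Fin (tensorRank (ww n)), x i p * y i q * z i s := by
      have := congrFun (congrFun (congrFun hxyz p) q) s
      simpa [Finset.sum_apply] using this
    have h2 : ∑ i : Fin (tensorRank (ww n)), x i p * y i q * z i s
        = ∑ i ∈ Finset.range (tensorRank (ww n)), pad x i p * pad y i q * pad z i s := by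
      rw [← Fin.sum_univ_eq_sum_range]
      refine Finset.sum_congr rfl fun i _ => ?_
      simp [pad, i.isLt]
    have h3 : ∑ i ∈ Finset.range (tensorRank (ww n)), pad x i p * pad y i q * pad z i s
        = ∑ i ∈ Finset.range 2, pad x i p * pad y i q * pad z i s := by
      refine Finset.sum_subset (Finset.range_subset_range.mpr hle) fun i _ hi => ?_
      have hnlt : ¬ i < tensorRank (ww n) := by simpa using hi
      simp [pad, hnlt]
    rw [h1, h2, h3, Finset.sum_range_succ, Finset.sum_range_one]
  exact key2 (pad x 0 ⟨0, by omega⟩) (pad x 0 ⟨1, by omega⟩)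
    (pad y 0 ⟨0, by omega⟩) (pad y 0 ⟨1, by omega⟩)
    (pad z 0 0) (pad z 0 1)
    (pad x 1 ⟨0, by omega⟩) (pad x 1 ⟨1, by omega⟩)
    (pad y 1 ⟨0, by omega⟩) (pad y 1 ⟨1, by omega⟩)
    (pad z 1 0) (pad z 1 1)
    (by have h := hentry ⟨0, by omega⟩ ⟨0, by omega⟩ 0; simp only [ww, u0, u1, v0, v1] at h; norm_num at h; linear_combination h)
    (by have h := hentry ⟨0, by omega⟩ ⟨0, by omega⟩ 1; simp only [ww, u0, u1, v0, v1] at h; norm_num at h; linear_combination h)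
    (by have h := hentry ⟨0, by omega⟩ ⟨1, by omega⟩ 0; simp only [ww, u0, u1, v0, v1] at h; norm_num at h; linear_combination h)
    (by have h := hentry ⟨0, by omega⟩ ⟨1, by omega⟩ 1; simp only [ww, u0, u1, v0, v1] at h; norm_num at h; linear_combination h)
    (by have h := hentry ⟨1, by omega⟩ ⟨0, by omega⟩ 0; simp only [ww, u0, u1, v0, v1] at h; norm_num at h; linear_combination h)
    (by have h := hentry ⟨1, by omega⟩ ⟨0, by omega⟩ 1; simp only [ww, u0, u1, v0, v1] at h; norm_num at h; linear_combination h)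
    (by have h := hentry ⟨1, by omega⟩ ⟨1, by omega⟩ 0; simp only [ww, u0, u1, v0, v1] at h; norm_num at h; linear_combination h)
    (by have h := hentry ⟨1, by omega⟩ ⟨1, by omega⟩ 1; simp only [ww, u0, u1, v0, v1] at h; norm_num at h; linear_combination h)

/-- Each approximant has tensor rank at most 2. -/
lemma bb_rank_le_two (n k : ℕ) : tensorRank (bb n k) ≤ 2 := by
  unfold tensorRank
  apply Nat.sInf_le
  refine ⟨![fun i => u0 i + tC k * u1 i, u0], ![fun i => u0 i + tC k * u1 i, u0],
    ![fun s => (tC k)⁻¹ * v0 s + v1 s, fun s => -(tC k)⁻¹ * v0 s], ?_⟩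
  funext p q s
  have ht := tC_ne k
  simp only [Finset.sum_apply, Fin.sum_univ_two, Matrix.cons_val_zero, Matrix.cons_val_one,
    Matrix.head_cons]
  fin_cases s
  · simp [bb, ww, v0, v1]
    field_simp
    ring
  · simp [bb, ww, v0, v1]
    ring

/-- The approximants converge to the W-tensor. -/
lemma bb_tendsto (n : ℕ) : Filter.Tendsto (fun k => bb n k) Filter.atTop (nhds (ww n)) := by
  have h0 : Filter.Tendsto tC Filter.atTop (nhds 0) := by
    rw [tendsto_zero_iff_norm_tendsto_zero]
    have hnorm : ∀ k : ℕ, ‖tC k‖ = ((k : ℝ) + 1)⁻¹ := by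
      intro k
      rw [tC, norm_inv]
      congr 1
      have : ((k : ℂ) + 1) = ((k + 1 : ℕ) : ℂ) := by push_cast; ring
      rw [this, Complex.norm_natCast]
      push_cast; ring
    simp only [hnorm]
    have : Filter.Tendsto (fun k : ℕ => (k : ℝ) + 1) Filter.atTop Filter.atTop :=
      Filter.tendsto_atTop_add_const_right _ 1 tendsto_natCast_atTop_atTop
    exact this.inv_tendsto_atTop
  rw [tendsto_pi_nhds]; intro p
  rw [tendsto_pi_nhds]; intro q
  rw [tendsto_pi_nhds]; intro s
  have := ((tendsto_const_nhds : Filter.Tendsto (fun _ : ℕ => ww n p q s)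
      Filter.atTop (nhds (ww n p q s))).add
    ((h0.mul_const (u0 p * u1 q * v1 s + u1 p * u0 q * v1 s + u1 p * u1 q * v0 s)))).add
    ((h0.pow 2).mul_const (u1 p * u1 q * v1 s))
  simpa [bb] using this

end TensorNotClosedAux

open TensorNotClosedAux in
/-- There exists `r` such that the set `S_r(n,n,2) = { B ∈ ℂ^{n×n×2} : rank(B) ≤ r }` is not
closed in the Euclidean topology; in particular the tensor rank is not upper semicontinuous
on `ℂ^{n×n×2}` for `n ≥ 2`. -/
theorem exists_rank_le_set_not_closed
    {n : ℕ} (hn : 2 ≤ n) :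
    (∃ r : ℕ, ¬ IsClosed {B : Fin n → Fin n → Fin 2 → ℂ | tensorRank B ≤ r}) ∧
    ¬ UpperSemicontinuous (fun B : Fin n → Fin n → Fin 2 → ℂ => tensorRank B) := by
  constructor
  · refine ⟨2, fun hcl => ?_⟩
    have hmem : ww n ∈ {B : Fin n → Fin n → Fin 2 → ℂ | tensorRank B ≤ 2} :=
      hcl.mem_of_tendsto (bb_tendsto n)
        (Filter.Eventually.of_forall fun k => bb_rank_le_two n k)
    exact ww_not_rank_le_two hn hmem
  · intro husc
    have h00 : tensorRank (0 : Fin n → Fin n → Fin 2 → ℂ) = 0 := by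
      unfold tensorRank
      refine Nat.sInf_eq_zero.mpr (Or.inl ?_)
      exact ⟨fun i => 0, fun i => 0, fun i => 0, by simp⟩
    have hev := husc 0 1 (by simp [h00])
    set D : ℕ → Fin n → Fin n → Fin 2 → ℂ :=
      fun k p q s => tC k * (u0 p * u0 q * v0 s) with hD
    have htD : Filter.Tendsto D Filter.atTop (nhds 0) := by
      have h0 : Filter.Tendsto tC Filter.atTop (nhds 0) := by
        rw [tendsto_zero_iff_norm_tendsto_zero]
        have hnorm : ∀ k : ℕ, ‖tC k‖ = ((k : ℝ) + 1)⁻¹ := by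
          intro k
          rw [tC, norm_inv]
          congr 1
          have : ((k : ℂ) + 1) = ((k + 1 : ℕ) : ℂ) := by push_cast; ring
          rw [this, Complex.norm_natCast]
          push_cast; ring
        simp only [hnorm]
        have : Filter.Tendsto (fun k : ℕ => (k : ℝ) + 1) Filter.atTop Filter.atTop :=
          Filter.tendsto_atTop_add_const_right _ 1 tendsto_natCast_atTop_atTop
        exact this.inv_tendsto_atTop
      rw [tendsto_pi_nhds]; intro p
      rw [tendsto_pi_nhds]; intro q
      rw [tendsto_pi_nhds]; intro s
      simpa [hD] using h0.mul_const (u0 p * u0 q * v0 s)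
    obtain ⟨k, hk⟩ := (htD.eventually hev).exists
    have h1mem : (1 : ℕ) ∈ {r : ℕ | ∃ (x : Fin r → Fin n → ℂ) (y : Fin r → Fin n → ℂ)
        (z : Fin r → Fin 2 → ℂ), D k = ∑ i : Fin r, fun p q s => x i p * y i q * z i s} := by
      refine ⟨![fun i => tC k * u0 i], ![u0], ![v0], ?_⟩
      funext p q s
      simp [hD, Finset.sum_apply, Fin.sum_univ_one]
      ring
    have hmem0 : tensorRank (D k) ∈ {r : ℕ | ∃ (x : Fin r → Fin n → ℂ)
        (y : Fin r → Fin n → ℂ) (z : Fin r → Fin 2 → ℂ),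
        D k = ∑ i : Fin r, fun p q s => x i p * y i q * z i s} := by
      unfold tensorRank
      exact Nat.sInf_mem ⟨1, h1mem⟩
    have hk0 : tensorRank (D k) = 0 := Nat.lt_one_iff.mp hk
    rw [hk0] at hmem0
    obtain ⟨x, y, z, hx⟩ := hmem0
    have hzero : D k ⟨0, by omega⟩ ⟨0, by omega⟩ 0 = 0 := by
      rw [hx]; simp
    rw [hD] at hzero
    norm_num [u0, v0] at hzero
    exact tC_ne k hzero
end

section
/- The 2×2×2 tensor A = [A₁|A₂] with slices A₁ = [[1,0],[0,−1]] and A₂ = [[0,−1],[−1,0]] satisfies rank_ℝ(A) = 3 when regarded as an element of ℝ^{2×2×2} and rank_ℂ(A) = 2 when regarded as an element of ℂ^{2×2×2}. -/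
open Matrix Finset

/-!
Contracting the third index of `A` with `w = (a, b)` gives the pencil `a A₁ + b A₂`, whose
determinant is `-(a² + b²)`. For a sum of two elementary tensors `xₜ ⊗ yₜ ⊗ zₜ` the same pencil is
`Xᵀ diag(⟨w, z₀⟩, ⟨w, z₁⟩) Y`, so its determinant is a product of two linear forms in `w`. Over `ℝ`,
choosing `w ⟂ z₀` makes it vanish, which forces `z₀ = 0` and then `det A₁ = 0`, a contradiction;
over `ℂ` the form `a² + b² = (a + ib)(a - ib)` does factor, and two terms suffice. One elementary
tensor is never enough because its slices have rank at most one while `A₁` is invertible.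
-/

def tensorA (R : Type*) [Ring R] : Fin 2 → Fin 2 → Fin 2 → R :=
  fun i j k => if k = 0 then !![1, 0; 0, -1] i j else !![0, -1; -1, 0] i j

def HasDecomposition {𝔽 : Type*} [Field 𝔽] {l m n : ℕ} (A : Fin l → Fin m → Fin n → 𝔽)
    (r : ℕ) : Prop :=
  ∃ (x : Fin r → Fin l → 𝔽) (y : Fin r → Fin m → 𝔽) (z : Fin r → Fin n → 𝔽),
    A = ∑ t, elemT (x t) (y t) (z t)

def sliceComb {R : Type*} [Semiring R] {l m n : ℕ} (A : Fin l → Fin m → Fin n → R)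
    (w : Fin n → R) : Matrix (Fin l) (Fin m) R :=
  of fun i j => ∑ k, w k * A i j k

section

variable {𝔽 : Type*} [Field 𝔽] {l m n : ℕ} {A : Fin l → Fin m → Fin n → 𝔽}

theorem HasDecomposition.succ {r : ℕ} (h : HasDecomposition A r) :
    HasDecomposition A (r + 1) := by
  obtain ⟨x, y, z, rfl⟩ := h
  refine ⟨Fin.cons 0 x, Fin.cons 0 y, Fin.cons 0 z, ?_⟩
  simp only [Fin.sum_univ_succ, Fin.cons_zero, Fin.cons_succ]
  funext i j k
  simp [elemT]

theorem HasDecomposition.mono {r s : ℕ} (h : HasDecomposition A r) (hrs : r ≤ s) :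
    HasDecomposition A s := by
  induction s, hrs using Nat.le_induction with
  | base => exact h
  | succ s _ ih => exact ih.succ

theorem tensorRank_eq_succ {r : ℕ} (h : HasDecomposition A (r + 1))
    (h' : ¬ HasDecomposition A r) : tensorRank A = r + 1 :=
  (Nat.sInf_upward_closed_eq_succ_iff (fun _ _ hle hk => HasDecomposition.mono hk hle) r).2
    ⟨h, h'⟩

theorem sliceComb_sum_elemT {r : ℕ} (x : Fin r → Fin l → 𝔽)
    (y : Fin r → Fin m → 𝔽) (z : Fin r → Fin n → 𝔽) (w : Fin n → 𝔽) :
    sliceComb (∑ t, elemT (x t) (y t) (z t)) w =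
      (of x)ᵀ * diagonal (fun t => ∑ k, w k * z t k) * of y := by
  ext i j
  simp only [sliceComb, elemT, of_apply, mul_apply, transpose_apply, diagonal_apply,
    Finset.sum_apply, mul_ite, mul_zero, Finset.sum_ite_eq', Finset.mem_univ, if_true,
    Finset.mul_sum, Finset.sum_mul]
  rw [Finset.sum_comm]
  exact Finset.sum_congr rfl fun t _ => Finset.sum_congr rfl fun k _ => by ring

theorem HasDecomposition.rank_sliceComb_le {r : ℕ} (h : HasDecomposition A r) (w : Fin n → 𝔽) :
    (sliceComb A w).rank ≤ r := by
  obtain ⟨x, y, z, rfl⟩ := h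
  rw [sliceComb_sum_elemT]
  exact (rank_mul_le_right _ _).trans (rank_le_height _)

theorem det_sliceComb_sum_elemT (x y : Fin 2 → Fin 2 → 𝔽)
    (z : Fin 2 → Fin n → 𝔽) (w : Fin n → 𝔽) :
    (sliceComb (∑ t, elemT (x t) (y t) (z t)) w).det =
      (of x).det * (of y).det * ∏ t, ∑ k, w k * z t k := by
  rw [sliceComb_sum_elemT, det_mul, det_mul, det_transpose, det_diagonal]
  ring

end

theorem sliceComb_tensorA {R : Type*} [Ring R] (a b : R) :
    sliceComb (tensorA R) ![a, b] = !![a, -b; -b, -a] := by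
  ext i j
  fin_cases i <;> fin_cases j <;> simp [sliceComb, tensorA, Fin.sum_univ_two]

theorem not_hasDecomposition_tensorA_one (𝔽 : Type*) [Field 𝔽] :
    ¬ HasDecomposition (tensorA 𝔽) 1 := by
  intro h
  have hrank : (sliceComb (tensorA 𝔽) ![1, 0]).rank = 2 := by
    rw [rank_of_isUnit _ ((isUnit_iff_isUnit_det _).2 ?_), Fintype.card_fin]
    simp [sliceComb_tensorA, det_fin_two]
  have := h.rank_sliceComb_le ![1, 0]
  omega

theorem not_hasDecomposition_tensorA_two_real : ¬ HasDecomposition (tensorA ℝ) 2 := by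
  rintro ⟨x, y, z, hA⟩
  have hdet (a b : ℝ) : -a ^ 2 - b ^ 2 =
      (of x).det * (of y).det * ((a * z 0 0 + b * z 0 1) * (a * z 1 0 + b * z 1 1)) := by
    have := det_sliceComb_sum_elemT x y z ![a, b]
    rw [← hA, sliceComb_tensorA, det_fin_two_of] at this
    simp only [mul_neg, neg_mul, neg_neg, Fin.sum_univ_two, cons_val_zero, cons_val_one,
      cons_val_fin_one, Fin.prod_univ_two] at this
    linear_combination this
  have hz0 : z 0 0 ^ 2 + z 0 1 ^ 2 = 0 := by
    have := hdet (-z 0 1) (z 0 0)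
    nlinarith
  have h00 : z 0 0 = 0 := by nlinarith
  have h01 : z 0 1 = 0 := by nlinarith
  have := hdet 1 0
  simp [h00, h01] at this

theorem hasDecomposition_tensorA_three_real : HasDecomposition (tensorA ℝ) 3 := by
  refine ⟨![![1, 0], ![0, 1], ![1, 1]], ![![1, 0], ![0, 1], ![1, 1]],
    ![![1, 1], ![-1, 1], ![0, -1]], ?_⟩
  funext i j k
  fin_cases i <;> fin_cases j <;> fin_cases k <;> simp [tensorA, elemT, Fin.sum_univ_three]

theorem hasDecomposition_tensorA_two_complex : HasDecomposition (tensorA ℂ) 2 := by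
  refine ⟨![![1, -Complex.I], ![1, Complex.I]], ![![1, -Complex.I], ![1, Complex.I]],
    ![![1 / 2, -Complex.I / 2], ![1 / 2, Complex.I / 2]], ?_⟩
  funext i j k
  fin_cases i <;> fin_cases j <;> fin_cases k <;> simp [tensorA, elemT, Fin.sum_univ_two] <;>
    ring_nf <;> simp

/-- The `2×2×2` tensor `A = [A₁|A₂]` with slices `A₁ = [[1,0],[0,−1]]` and
`A₂ = [[0,−1],[−1,0]]` has tensor rank `3` over `ℝ` and tensor rank `2` over `ℂ`. -/
theorem tensorRank_depends_on_field :
    tensorRank (fun i j k : Fin 2 =>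
      if k = 0 then (!![1, 0; 0, -1] : Matrix (Fin 2) (Fin 2) ℝ) i j
      else (!![0, -1; -1, 0] : Matrix (Fin 2) (Fin 2) ℝ) i j) = 3 ∧
    tensorRank (fun i j k : Fin 2 =>
      if k = 0 then (!![1, 0; 0, -1] : Matrix (Fin 2) (Fin 2) ℂ) i j
      else (!![0, -1; -1, 0] : Matrix (Fin 2) (Fin 2) ℂ) i j) = 2 :=
  ⟨tensorRank_eq_succ hasDecomposition_tensorA_three_real not_hasDecomposition_tensorA_two_real,
    tensorRank_eq_succ hasDecomposition_tensorA_two_complex (not_hasDecomposition_tensorA_one ℂ)⟩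
end

section
/- Let n ≥ 2 and let B = [B₁|B₂] ∈ ℂ^{n×n×2} be a tensor whose slices B₁, B₂ ∈ ℂ^{n×n} satisfy: B₁ is invertible and the matrix B₂B₁⁻¹ has pairwise distinct eigenvalues. Then the tensor rank of B equals n. -/
open Matrix Finset

/-!
The first slice `B₁` is a product `X * D * Y` with `X` of width `r` whenever `B` is a sum of
`r` elementary tensors, so `n = rank B₁ ≤ r`. Conversely, distinct eigenvalues make
`A = B₂ B₁⁻¹` diagonalizable, `A V = V D`, and then `B₁ = V (V⁻¹ B₁)` and
`B₂ = V D (V⁻¹ B₁)` exhibit `B` as a sum of `n` elementary tensors.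
-/

section SumOfElementary

variable {K : Type*} [CommSemiring K] {ι α β γ : Type*} [Fintype ι] [DecidableEq ι]

theorem sum_elementary_apply (x : ι → α → K) (y : ι → β → K) (z : ι → γ → K)
    (i : α) (j : β) (s : γ) :
    (∑ t, fun p q s => x t p * y t q * z t s) i j s =
      (of (fun p t => x t p) * diagonal (fun t => z t s) * of y) i j := by
  simp only [Finset.sum_apply, mul_apply, diagonal_apply, of_apply]
  simp only [mul_ite, mul_zero, Finset.sum_ite_eq', Finset.mem_univ, if_true]
  exact Finset.sum_congr rfl fun t _ => mul_right_comm _ _ _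

theorem rank_slice_sum_elementary_le [Fintype α] [Fintype β] [StrongRankCondition K]
    (x : ι → α → K) (y : ι → β → K) (z : ι → γ → K) (s : γ) :
    (Matrix.of fun i j => (∑ t, fun p q s => x t p * y t q * z t s) i j s).rank ≤
      Fintype.card ι := by
  calc _ = (of (fun p t => x t p) * diagonal (fun t => z t s) * of y).rank :=
        congrArg rank (ext fun i j => sum_elementary_apply x y z i j s)
    _ ≤ (of (fun p t => x t p) * diagonal (fun t => z t s)).rank := rank_mul_le_left _ _
    _ ≤ (of fun p t => x t p).rank := rank_mul_le_left _ _
    _ ≤ Fintype.card ι := rank_le_card_width _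

end SumOfElementary

namespace Matrix

variable {K : Type*} [Field K] {n : Type*} [Fintype n] [DecidableEq n]

theorem exists_injective_isRoot_charpoly [IsAlgClosed K] {A : Matrix n n K}
    (h : A.charpoly.roots.Nodup) :
    ∃ μ : n → K, Function.Injective μ ∧ ∀ i, A.charpoly.IsRoot (μ i) := by
  classical
  have hcard : Fintype.card n = Fintype.card A.charpoly.roots.toFinset := by
    rw [Fintype.card_coe, Multiset.toFinset_card_of_nodup h,
      IsAlgClosed.card_roots_eq_natDegree, charpoly_natDegree_eq_dim]
  let e := Fintype.equivOfCardEq hcard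
  refine ⟨fun i => e i, Subtype.val_injective.comp e.injective, fun i => ?_⟩
  exact (Polynomial.mem_roots A.charpoly_monic.ne_zero).mp (Multiset.mem_toFinset.mp (e i).2)

theorem exists_isUnit_mul_eq_mul_diagonal (A : Matrix n n K) (μ : n → K)
    (hμ : Function.Injective μ) (hroot : ∀ i, A.charpoly.IsRoot (μ i)) :
    ∃ V : Matrix n n K, IsUnit V ∧ A * V = V * diagonal μ := by
  have hev : ∀ i, ∃ v, Module.End.HasEigenvector (toLin' A) (μ i) v := fun i =>
    ((Module.End.hasEigenvalue_iff_isRoot_charpoly _ _).mpr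
      (by rw [charpoly_toLin']; exact hroot i)).exists_hasEigenvector
  choose v hv using hev
  refine ⟨(Matrix.of v)ᵀ, linearIndependent_cols_iff_isUnit.mp ?_, ?_⟩
  · exact Module.End.eigenvectors_linearIndependent' _ μ hμ v hv
  · ext j i
    have hAv := congrFun ((hv i).apply_eq_smul) j
    simp only [toLin'_apply, Pi.smul_apply, smul_eq_mul] at hAv
    rw [mul_diagonal, transpose_apply, of_apply, mul_comm, ← hAv]
    rfl

theorem eq_mul_diagonal_mul_of_mul_inv_mul_eq {M₁ M₂ V D : Matrix n n K} (h₁ : IsUnit M₁)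
    (hV : IsUnit V) (h : M₂ * M₁⁻¹ * V = V * D) : M₂ = V * D * (V⁻¹ * M₁) := by
  calc M₂ = M₂ * M₁⁻¹ * (V * (V⁻¹ * M₁)) := by
        rw [mul_nonsing_inv_cancel_left V M₁ ((isUnit_iff_isUnit_det V).mp hV),
          nonsing_inv_mul_cancel_right M₁ M₂ ((isUnit_iff_isUnit_det M₁).mp h₁)]
    _ = V * D * (V⁻¹ * M₁) := by rw [← h, Matrix.mul_assoc (M₂ * M₁⁻¹)]

end Matrix

theorem tensorRank_eq_n_of_simple_spectrum_slices_general
    {n : ℕ} (B : Fin n → Fin n → Fin 2 → ℂ)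
    (hB₁ : IsUnit (Matrix.of fun i j => B i j (0 : Fin 2)))
    (hsimple : (((Matrix.of fun i j => B i j (1 : Fin 2)) *
        (Matrix.of fun i j => B i j (0 : Fin 2))⁻¹ :
        Matrix (Fin n) (Fin n) ℂ)).charpoly.roots.Nodup) :
    tensorRank B = n := by
  set M₁ : Matrix (Fin n) (Fin n) ℂ := Matrix.of fun i j => B i j 0
  set M₂ : Matrix (Fin n) (Fin n) ℂ := Matrix.of fun i j => B i j 1
  obtain ⟨μ, hμ, hroot⟩ := exists_injective_isRoot_charpoly hsimple
  obtain ⟨V, hV, hAV⟩ := exists_isUnit_mul_eq_mul_diagonal _ μ hμ hroot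
  have hM₁ : M₁ = V * diagonal (fun _ => 1) * (V⁻¹ * M₁) := by
    rw [diagonal_one, Matrix.mul_one,
      mul_nonsing_inv_cancel_left V M₁ ((isUnit_iff_isUnit_det V).mp hV)]
  have hM₂ : M₂ = V * diagonal μ * (V⁻¹ * M₁) :=
    eq_mul_diagonal_mul_of_mul_inv_mul_eq hB₁ hV hAV
  refine IsLeast.csInf_eq ⟨⟨fun t p => V p t, V⁻¹ * M₁, fun t => ![1, μ t], ?_⟩, ?_⟩
  · funext i j s
    refine Eq.trans ?_ (sum_elementary_apply _ _ _ i j s).symm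
    fin_cases s
    · exact congrFun (congrFun hM₁ i) j
    · exact congrFun (congrFun hM₂ i) j
  · rintro r ⟨x, y, z, rfl⟩
    calc n = M₁.rank := by rw [rank_of_isUnit M₁ hB₁, Fintype.card_fin]
      _ ≤ r := (rank_slice_sum_elementary_le x y z 0).trans_eq (Fintype.card_fin r)

/-- Let `n ≥ 2` and let `B = [B₁|B₂] ∈ ℂ^{n×n×2}` be a tensor whose slices
`B₁ = (b_{ij0})`, `B₂ = (b_{ij1})` satisfy: `B₁` is invertible and `B₂ B₁⁻¹` has pairwise
distinct eigenvalues (its characteristic polynomial has `n` distinct roots). Then the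
tensor rank of `B` equals `n`. -/
theorem tensorRank_eq_n_of_simple_spectrum_slices
    {n : ℕ} (hn : 2 ≤ n) (B : Fin n → Fin n → Fin 2 → ℂ)
    (hB₁ : IsUnit (Matrix.of fun i j => B i j (0 : Fin 2)))
    (hsimple : (((Matrix.of fun i j => B i j (1 : Fin 2)) *
        (Matrix.of fun i j => B i j (0 : Fin 2))⁻¹ :
        Matrix (Fin n) (Fin n) ℂ)).charpoly.roots.Nodup) :
    tensorRank B = n :=
  tensorRank_eq_n_of_simple_spectrum_slices_general B hB₁ hsimple
end
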